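/- arXiv:1901.07276 — 10 statements merged into one kernel-verified Lean document; each statement's English description precedes it below -/
import Mathlib

section
/- The linear functional τ(f) = ∫_ℝ f₀(u) du on the noncommutative cylinder algebra is a trace: τ(f •_ℏ g) = τ(g •_ℏ f) for all f, g. -/
open MeasureTheory

/-- The twisted product `(f • g)_n(u) = ∑_k f_k(u) g_{n-k}(u + kℏ)`. -/
noncomputable def ncProd (ℏ : ℝ) (f g : ℤ → ℝ → ℂ) : ℤ → ℝ → ℂ :=
  fun n u => ∑' k : ℤ, f k u * g (n - k) (u + k * ℏ)

/-- The trace `τ(f) = ∫_ℝ f₀(u) du`. -/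
noncomputable def tau (f : ℤ → ℝ → ℂ) : ℂ := ∫ u : ℝ, f 0 u

/-!
Only the diagonal terms `k + (-k) = 0` contribute to `τ`, and these are finitely many integrals
`∫ f_k(u) g_{-k}(u + kℏ) du`. The translation `u ↦ u - kℏ` turns such an integral into
`∫ g_{-k}(u) f_k(u - kℏ) du`, which is the term of index `-k` of `τ(g •_ℏ f)`.
-/

open scoped Pointwise

lemma ncProd_apply_eq_sum (ℏ : ℝ) {f : ℤ → ℝ → ℂ} (g : ℤ → ℝ → ℂ) {s : Finset ℤ}
    (hs : ∀ k ∉ s, f k = 0) (n : ℤ) (u : ℝ) :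
    ncProd ℏ f g n u = ∑ k ∈ s, f k u * g (n - k) (u + k * ℏ) :=
  tsum_eq_sum fun k hk => by simp [hs k hk]

lemma SchwartzMap.integrable_mul_comp_add_right (φ ψ : SchwartzMap ℝ ℂ) (c : ℝ) :
    Integrable fun u : ℝ => φ u * ψ (u + c) :=
  φ.integrable.mul_bdd ((ψ.continuous.comp (continuous_add_const c)).aestronglyMeasurable)
    (Filter.Eventually.of_forall fun u => ψ.norm_le_seminorm ℝ (u + c))

lemma integral_mul_comp_add_right_eq (φ ψ : ℝ → ℂ) (c : ℝ) :
    ∫ u, φ u * ψ (u + c) = ∫ u, ψ u * φ (u - c) := by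
  rw [← integral_sub_right_eq_self (fun u => φ u * ψ (u + c)) c]
  simp_rw [sub_add_cancel, mul_comm]

lemma tau_ncProd_eq_sum (ℏ : ℝ) {f : ℤ → SchwartzMap ℝ ℂ} (g : ℤ → SchwartzMap ℝ ℂ)
    {s : Finset ℤ} (hs : ∀ k ∉ s, f k = 0) :
    tau (ncProd ℏ (fun n => ⇑(f n)) (fun n => ⇑(g n))) =
      ∑ k ∈ s, ∫ u, f k u * g (-k) (u + k * ℏ) := by
  have hs' : ∀ k ∉ s, ⇑(f k) = 0 := fun k hk => by simp [hs k hk]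
  simp only [tau, ncProd_apply_eq_sum ℏ _ hs', zero_sub]
  exact integral_finsetSum s fun k _ => (f k).integrable_mul_comp_add_right (g (-k)) _

/-- `τ` is a trace: `τ(f •_ℏ g) = τ(g •_ℏ f)`. -/
theorem tau_trace (ℏ : ℝ) (f g : ℤ → SchwartzMap ℝ ℂ)
    (hf : (Function.support f).Finite) (hg : (Function.support g).Finite) :
    tau (ncProd ℏ (fun n => ⇑(f n)) (fun n => ⇑(g n))) =
      tau (ncProd ℏ (fun n => ⇑(g n)) (fun n => ⇑(f n))) := by
  classical
  set s : Finset ℤ := hf.toFinset ∪ -hg.toFinset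
  have hfs : ∀ k ∉ s, f k = 0 := fun k hk => by
    by_contra h
    exact hk (by simp [s, hf.mem_toFinset.2 h])
  have hgs : ∀ k ∉ -s, g k = 0 := fun k hk => by
    by_contra h
    exact hk (by simp [s, hg.mem_toFinset.2 h])
  rw [tau_ncProd_eq_sum ℏ g hfs, tau_ncProd_eq_sum ℏ f hgs, Finset.sum_neg_index]
  refine Finset.sum_congr rfl fun k _ => ?_
  rw [integral_mul_comp_add_right_eq, neg_neg]
  congr! 4
  push_cast
  ring
end

section
/- The trace τ on the noncommutative cylinder is positive: τ(f* •_ℏ f) ≥ 0 for all f, with τ(f* •_ℏ f) = Σ_k ∫_ℝ |f_{-k}(u + kℏ)|² du. -/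
open MeasureTheory

/-- The involution `(f*)_n(u) = conj (f_{-n}(u + nℏ))`. -/
noncomputable def ncStar (ℏ : ℝ) (f : ℤ → ℝ → ℂ) : ℤ → ℝ → ℂ :=
  fun n u => starRingEnd ℂ (f (-n) (u + n * ℏ))

/-! The zeroth coefficient of `f* • f` is `u ↦ ∑_k |f_{-k}(u + kℏ)|²`, a sum with finitely many
nonzero terms, each integrable because Schwartz functions are square integrable; so integrating
term by term gives the formula, and the right-hand side is visibly nonnegative. -/

theorem MeasureTheory.integral_tsum_of_support_finite {ι α E : Type*} [MeasurableSpace α]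
    {μ : Measure α} [NormedAddCommGroup E] [NormedSpace ℝ E] {F : ι → α → E}
    (hF : (Function.support F).Finite) (hint : ∀ i, Integrable (F i) μ) :
    ∫ a, ∑' i, F i a ∂μ = ∑' i, ∫ a, F i a ∂μ := by
  have hsupp : ∀ a, Function.support (F · a) ⊆ hF.toFinset := fun a i hi => by
    simpa using fun h : F i = 0 => hi (congrFun h a)
  have hsupp_integral : Function.support (fun i => ∫ a, F i a ∂μ) ⊆ hF.toFinset := fun i hi => by
    simpa using fun h : F i = 0 => hi (by simp [h])
  rw [tsum_eq_sum' hsupp_integral, ← integral_finsetSum _ fun i _ => hint i]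
  exact integral_congr_ae (.of_forall fun a => tsum_eq_sum' (hsupp a))

theorem SchwartzMap.integrable_norm_sq_comp_add_right {F : Type*} [NormedAddCommGroup F]
    [NormedSpace ℝ F] (g : SchwartzMap ℝ F) (c : ℝ) :
    Integrable fun u : ℝ => ‖g (u + c)‖ ^ 2 :=
  ((g.memLp 2).integrable_norm_pow two_ne_zero).comp_add_right c

theorem ncProd_ncStar_self_zero (ℏ : ℝ) (f : ℤ → ℝ → ℂ) (u : ℝ) :
    ncProd ℏ (ncStar ℏ f) f 0 u = ((∑' k : ℤ, ‖f (-k) (u + k * ℏ)‖ ^ 2 : ℝ) : ℂ) := by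
  rw [Complex.ofReal_tsum]
  refine tsum_congr fun k => ?_
  rw [ncStar, zero_sub, mul_comm, Complex.mul_conj, Complex.normSq_eq_norm_sq,
    Complex.ofReal_pow]

/-- `τ` is positive: `τ(f* •_ℏ f) = ∑_k ∫ |f_{-k}(u + kℏ)|² du ≥ 0`. -/
theorem tau_positive (ℏ : ℝ) (f : ℤ → SchwartzMap ℝ ℂ)
    (hf : (Function.support f).Finite) :
    tau (ncProd ℏ (ncStar ℏ (fun n => ⇑(f n))) (fun n => ⇑(f n)))
        = ((∑' k : ℤ, ∫ u : ℝ, ‖f (-k) (u + k * ℏ)‖ ^ 2 : ℝ) : ℂ) ∧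
    0 ≤ (tau (ncProd ℏ (ncStar ℏ (fun n => ⇑(f n))) (fun n => ⇑(f n)))).re := by
  have hsupp : (Function.support fun k : ℤ => fun u : ℝ => ‖f (-k) (u + k * ℏ)‖ ^ 2).Finite :=
    hf.neg.subset fun k hk => by
      simpa using fun h : f (-k) = 0 => hk (by ext; simp [h])
  have htrace : tau (ncProd ℏ (ncStar ℏ (fun n => ⇑(f n))) (fun n => ⇑(f n)))
      = ((∑' k : ℤ, ∫ u : ℝ, ‖f (-k) (u + k * ℏ)‖ ^ 2 : ℝ) : ℂ) := by
    simp only [tau, ncProd_ncStar_self_zero]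
    rw [integral_complex_ofReal, integral_tsum_of_support_finite hsupp fun k =>
      (f (-k)).integrable_norm_sq_comp_add_right _]
  refine ⟨htrace, ?_⟩
  rw [htrace, Complex.ofReal_re]
  exact tsum_nonneg fun k => integral_nonneg fun u => sq_nonneg _
end

section
/- The trilinear functional Ψ(f₀,f₁,f₂) = (1/2πi) τ(f₀(∂₁f₁)(∂₂f₂) − f₀(∂₂f₁)(∂₁f₂)) on the noncommutative cylinder is cyclic: Ψ(f₂,f₀,f₁) = Ψ(f₀,f₁,f₂). -/
open MeasureTheory

/-- `∂₁ f = ∑_n f_n'(u) W^n`. -/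
noncomputable def d1 (f : ℤ → ℝ → ℂ) : ℤ → ℝ → ℂ := fun n u => deriv (f n) u

/-- `∂₂ f = 2πi ∑_n n f_n(u) W^n`. -/
noncomputable def d2 (f : ℤ → ℝ → ℂ) : ℤ → ℝ → ℂ :=
  fun n u => 2 * Real.pi * Complex.I * n * f n u

/-- `Ψ(f₀,f₁,f₂) = (1/2πi) τ(f₀(∂₁f₁)(∂₂f₂) − f₀(∂₂f₁)(∂₁f₂))`. -/
noncomputable def Psi (ℏ : ℝ) (a b c : ℤ → ℝ → ℂ) : ℂ :=
  (2 * Real.pi * Complex.I)⁻¹ *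
    (tau (ncProd ℏ (ncProd ℏ a (d1 b)) (d2 c)) -
      tau (ncProd ℏ (ncProd ℏ a (d2 b)) (d1 c)))

/-!
Write `τ₃(F, G, H) = τ((F·G)·H)`. Expanding the twisted products, `τ₃` is a finite sum of integrals
of `F_j(u) G_{k-j}(u + jℏ) H_{-k}(u + kℏ)`, and translating `u` by `jℏ` shows that `τ₃` is invariant
under rotating its three arguments. Integration by parts (Schwartz functions vanish at infinity) and
the vanishing of the total degree `j + (k - j) - k` give the Leibniz rules
`τ₃(δF, G, H) + τ₃(F, δG, H) + τ₃(F, G, δH) = 0` for `δ = ∂₁, ∂₂`. Together with `∂₁∂₂ = ∂₂∂₁`,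
rotation invariance and these two rules imply the cyclicity of `Ψ` by pure algebra.
-/

open scoped SchwartzMap Pointwise

theorem sub_eq_sub_of_cyclic_of_leibniz {A : Type*} (T : A → A → A → ℂ) (δ₁ δ₂ : A → A)
    (hcomm : ∀ a, δ₁ (δ₂ a) = δ₂ (δ₁ a)) (hcyc : ∀ a b c, T a b c = T b c a)
    (hδ₁ : ∀ a b c, T (δ₁ a) b c + T a (δ₁ b) c + T a b (δ₁ c) = 0)
    (hδ₂ : ∀ a b c, T (δ₂ a) b c + T a (δ₂ b) c + T a b (δ₂ c) = 0) (a b c : A) :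
    T c (δ₁ a) (δ₂ b) - T c (δ₂ a) (δ₁ b) = T a (δ₁ b) (δ₂ c) - T a (δ₂ b) (δ₁ c) := by
  have h₁ := hδ₁ a (δ₂ b) c
  have h₂ := hδ₂ a (δ₁ b) c
  rw [hcomm] at h₁
  linear_combination h₁ - h₂ + hcyc c (δ₁ a) (δ₂ b) - hcyc c (δ₂ a) (δ₁ b)

namespace SchwartzMap

lemma integrable_mul_comp_add_mul_comp_add (f g h : 𝓢(ℝ, ℂ)) (s t : ℝ) :
    Integrable (fun u => f u * g (u + s) * h (u + t)) :=
  (f.integrable.mul_bdd (g.continuous.comp (continuous_add_const s)).aestronglyMeasurable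
    (ae_of_all _ fun _ => g.toBoundedContinuousFunction.norm_coe_le_norm _)).mul_bdd
    (h.continuous.comp (continuous_add_const t)).aestronglyMeasurable
    (ae_of_all _ fun _ => h.toBoundedContinuousFunction.norm_coe_le_norm _)

lemma integral_leibniz_mul_comp_add_mul_comp_add (f g h : 𝓢(ℝ, ℂ)) (s t : ℝ) :
    (∫ u, deriv f u * g (u + s) * h (u + t)) + (∫ u, f u * deriv g (u + s) * h (u + t))
      + (∫ u, f u * g (u + s) * deriv h (u + t)) = 0 := by
  have hf' := integrable_mul_comp_add_mul_comp_add (derivCLM ℂ ℂ f) g h s t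
  have hg' := integrable_mul_comp_add_mul_comp_add f (derivCLM ℂ ℂ g) h s t
  have hh' := integrable_mul_comp_add_mul_comp_add f g (derivCLM ℂ ℂ h) s t
  simp only [derivCLM_apply] at hf' hg' hh'
  have hderiv (u : ℝ) : HasDerivAt (fun u => f u * g (u + s) * h (u + t))
      (deriv f u * g (u + s) * h (u + t) + f u * deriv g (u + s) * h (u + t)
        + f u * g (u + s) * deriv h (u + t)) u := by
    refine (((f.hasDerivAt u).mul ((g.hasDerivAt _).comp_add_const u s)).mul
      ((h.hasDerivAt _).comp_add_const u t)).congr_deriv ?_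
    simp only [Pi.mul_apply]
    ring
  have hfg' : Integrable fun u =>
      deriv f u * g (u + s) * h (u + t) + f u * deriv g (u + s) * h (u + t) := hf'.add hg'
  rw [← integral_add hf' hg', ← integral_add hfg' hh']
  exact integral_eq_zero_of_hasDerivAt_of_integrable hderiv (hfg'.add hh')
    (integrable_mul_comp_add_mul_comp_add f g h s t)

end SchwartzMap

namespace NCCylinder

variable (ℏ : ℝ)

noncomputable def traceTerm (F G H : ℤ → ℝ → ℂ) (p : ℤ × ℤ) : ℂ :=
  ∫ u, F p.2 u * G (p.1 - p.2) (u + p.2 * ℏ) * H (0 - p.1) (u + p.1 * ℏ)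

lemma traceTerm_rotate (F G H : ℤ → ℝ → ℂ) (p : ℤ × ℤ) :
    traceTerm ℏ F G H p = traceTerm ℏ G H F (-p.2, p.1 - p.2) := by
  rw [traceTerm, traceTerm]
  symm
  -- substitute `u ↦ u + jℏ`
  rw [← integral_add_right_eq_self _ (p.2 * ℏ)]
  congr 1 with u
  rw [show -p.2 - (p.1 - p.2) = 0 - p.1 by ring, show (0 : ℤ) - -p.2 = p.2 by ring]
  push_cast
  ring_nf

def rotateIndex : ℤ × ℤ ≃ ℤ × ℤ where
  toFun p := (-p.2, p.1 - p.2)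
  invFun q := (q.2 - q.1, -q.1)
  left_inv p := by simp
  right_inv q := by simp

lemma tsum_traceTerm_rotate (F G H : ℤ → ℝ → ℂ) :
    ∑' p, traceTerm ℏ F G H p = ∑' p, traceTerm ℏ G H F p :=
  (tsum_congr (traceTerm_rotate ℏ F G H)).trans (rotateIndex.tsum_eq _)

lemma traceTerm_d2 (F G H : ℤ → ℝ → ℂ) (p : ℤ × ℤ) :
    traceTerm ℏ (d2 F) G H p + traceTerm ℏ F (d2 G) H p + traceTerm ℏ F G (d2 H) p = 0 := by
  have scale (c : ℂ) (φ ψ : ℝ → ℂ) (h : ∀ u, φ u = c * ψ u) : ∫ u, φ u = c * ∫ u, ψ u := by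
    rw [← integral_const_mul]; exact integral_congr_ae (ae_of_all _ h)
  have hF : traceTerm ℏ (d2 F) G H p = 2 * Real.pi * Complex.I * p.2 * traceTerm ℏ F G H p :=
    scale _ _ _ fun u => by simp only [d2]; ring
  have hG : traceTerm ℏ F (d2 G) H p
      = 2 * Real.pi * Complex.I * (p.1 - p.2 : ℤ) * traceTerm ℏ F G H p :=
    scale _ _ _ fun u => by simp only [d2]; ring
  have hH : traceTerm ℏ F G (d2 H) p
      = 2 * Real.pi * Complex.I * (0 - p.1 : ℤ) * traceTerm ℏ F G H p :=
    scale _ _ _ fun u => by simp only [d2]; ring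
  rw [hF, hG, hH]
  push_cast
  ring

/-- `F : ℤ →₀ 𝓢(ℝ, ℂ)` stands for the element `∑ₙ Fₙ Wⁿ` of the cylinder algebra. -/
noncomputable def coeffs (F : ℤ →₀ 𝓢(ℝ, ℂ)) : ℤ → ℝ → ℂ := fun n => F n

noncomputable def tauTriple (F G H : ℤ →₀ 𝓢(ℝ, ℂ)) : ℂ :=
  tau (ncProd ℏ (ncProd ℏ (coeffs F) (coeffs G)) (coeffs H))

noncomputable def D₁ (F : ℤ →₀ 𝓢(ℝ, ℂ)) : ℤ →₀ 𝓢(ℝ, ℂ) :=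
  F.mapRange (SchwartzMap.derivCLM ℂ ℂ) (map_zero _)

noncomputable def D₂ (F : ℤ →₀ 𝓢(ℝ, ℂ)) : ℤ →₀ 𝓢(ℝ, ℂ) :=
  Finsupp.ofSupportFinite (fun n => (2 * Real.pi * Complex.I * n : ℂ) • F n)
    (F.hasFiniteSupport.subset (Function.support_smul_subset_right
      (fun n : ℤ => (2 * Real.pi * Complex.I * n : ℂ)) F))

lemma coeffs_D₁ (F : ℤ →₀ 𝓢(ℝ, ℂ)) : coeffs (D₁ F) = d1 (coeffs F) := by
  ext n u
  simp [coeffs, D₁, d1]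

lemma coeffs_D₂ (F : ℤ →₀ 𝓢(ℝ, ℂ)) : coeffs (D₂ F) = d2 (coeffs F) := rfl

lemma D₁_D₂ (F : ℤ →₀ 𝓢(ℝ, ℂ)) : D₁ (D₂ F) = D₂ (D₁ F) := by
  ext n : 1
  simp [D₁, D₂, Finsupp.ofSupportFinite_coe]

def traceIndices (F H : ℤ →₀ 𝓢(ℝ, ℂ)) : Finset (ℤ × ℤ) :=
  (-H.support) ×ˢ F.support

lemma traceTerm_eq_zero_of_notMem (F H : ℤ →₀ 𝓢(ℝ, ℂ)) (G : ℤ → ℝ → ℂ) {p : ℤ × ℤ}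
    (hp : p ∉ traceIndices F H) : traceTerm ℏ (coeffs F) G (coeffs H) p = 0 := by
  simp only [traceIndices, Finset.mem_product, Finset.mem_neg', Finsupp.mem_support_iff,
    not_and_or, not_not] at hp
  rcases hp with hH | hF
  · simp [traceTerm, coeffs, hH]
  · simp [traceTerm, coeffs, hF]

lemma summable_traceTerm (F H : ℤ →₀ 𝓢(ℝ, ℂ)) (G : ℤ → ℝ → ℂ) :
    Summable (traceTerm ℏ (coeffs F) G (coeffs H)) :=
  summable_of_ne_finset_zero fun _ => traceTerm_eq_zero_of_notMem ℏ F H G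

lemma ncProd_ncProd_apply_zero (F H : ℤ →₀ 𝓢(ℝ, ℂ)) (G : ℤ → ℝ → ℂ) (u : ℝ) :
    ncProd ℏ (ncProd ℏ (coeffs F) G) (coeffs H) 0 u = ∑ p ∈ traceIndices F H,
      coeffs F p.2 u * G (p.1 - p.2) (u + p.2 * ℏ) * coeffs H (0 - p.1) (u + p.1 * ℏ) := by
  simp only [ncProd]
  rw [tsum_eq_sum (s := -H.support) fun k hk => ?_, traceIndices, Finset.sum_product]
  · refine Finset.sum_congr rfl fun k _ => ?_
    rw [tsum_eq_sum (s := F.support) fun j hj => ?_, Finset.sum_mul]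
    simp [coeffs, Finsupp.notMem_support_iff.mp hj]
  · simp [coeffs, Finsupp.notMem_support_iff.mp (Finset.mem_neg'.not.mp hk)]

lemma tauTriple_eq_tsum (F G H : ℤ →₀ 𝓢(ℝ, ℂ)) :
    tauTriple ℏ F G H = ∑' p, traceTerm ℏ (coeffs F) (coeffs G) (coeffs H) p := by
  rw [tsum_eq_sum fun _ => traceTerm_eq_zero_of_notMem ℏ F H _, tauTriple, tau]
  simp_rw [ncProd_ncProd_apply_zero]
  exact integral_finsetSum _ fun p _ =>
    SchwartzMap.integrable_mul_comp_add_mul_comp_add (F p.2) (G (p.1 - p.2)) (H (0 - p.1)) _ _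

lemma tauTriple_rotate (F G H : ℤ →₀ 𝓢(ℝ, ℂ)) : tauTriple ℏ F G H = tauTriple ℏ G H F := by
  rw [tauTriple_eq_tsum, tauTriple_eq_tsum, tsum_traceTerm_rotate]

lemma tauTriple_leibniz (δ : (ℤ →₀ 𝓢(ℝ, ℂ)) → ℤ →₀ 𝓢(ℝ, ℂ))
    (d : (ℤ → ℝ → ℂ) → ℤ → ℝ → ℂ) (hδ : ∀ F, coeffs (δ F) = d (coeffs F))
    (hd : ∀ F G H p, traceTerm ℏ (d (coeffs F)) (coeffs G) (coeffs H) p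
      + traceTerm ℏ (coeffs F) (d (coeffs G)) (coeffs H) p
      + traceTerm ℏ (coeffs F) (coeffs G) (d (coeffs H)) p = 0)
    (F G H : ℤ →₀ 𝓢(ℝ, ℂ)) :
    tauTriple ℏ (δ F) G H + tauTriple ℏ F (δ G) H + tauTriple ℏ F G (δ H) = 0 := by
  have hsum := ((summable_traceTerm ℏ (δ F) H (coeffs G)).hasSum.add
    (summable_traceTerm ℏ F H (coeffs (δ G))).hasSum).add
    (summable_traceTerm ℏ F (δ H) (coeffs G)).hasSum
  simp only [tauTriple_eq_tsum]
  refine hsum.unique ?_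
  simpa only [hδ, hd] using hasSum_zero

lemma tauTriple_D₁ (F G H : ℤ →₀ 𝓢(ℝ, ℂ)) :
    tauTriple ℏ (D₁ F) G H + tauTriple ℏ F (D₁ G) H + tauTriple ℏ F G (D₁ H) = 0 :=
  tauTriple_leibniz ℏ D₁ d1 coeffs_D₁ (fun F G H p =>
    SchwartzMap.integral_leibniz_mul_comp_add_mul_comp_add
      (F p.2) (G (p.1 - p.2)) (H (0 - p.1)) _ _) F G H

lemma tauTriple_D₂ (F G H : ℤ →₀ 𝓢(ℝ, ℂ)) :
    tauTriple ℏ (D₂ F) G H + tauTriple ℏ F (D₂ G) H + tauTriple ℏ F G (D₂ H) = 0 :=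
  tauTriple_leibniz ℏ D₂ d2 coeffs_D₂ (fun _ _ _ => traceTerm_d2 ℏ _ _ _) F G H

lemma Psi_coeffs (F G H : ℤ →₀ 𝓢(ℝ, ℂ)) :
    Psi ℏ (coeffs F) (coeffs G) (coeffs H) = (2 * Real.pi * Complex.I)⁻¹ *
      (tauTriple ℏ F (D₁ G) (D₂ H) - tauTriple ℏ F (D₂ G) (D₁ H)) := by
  simp only [Psi, tauTriple, coeffs_D₁, coeffs_D₂]

end NCCylinder

open NCCylinder

/-- `Ψ` is cyclic: `Ψ(f₂,f₀,f₁) = Ψ(f₀,f₁,f₂)`. -/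
theorem Psi_cyclic (ℏ : ℝ) (f0 f1 f2 : ℤ → SchwartzMap ℝ ℂ)
    (h0 : (Function.support f0).Finite) (h1 : (Function.support f1).Finite)
    (h2 : (Function.support f2).Finite) :
    Psi ℏ (fun n => ⇑(f2 n)) (fun n => ⇑(f0 n)) (fun n => ⇑(f1 n)) =
      Psi ℏ (fun n => ⇑(f0 n)) (fun n => ⇑(f1 n)) (fun n => ⇑(f2 n)) := by
  change Psi ℏ (coeffs (.ofSupportFinite f2 h2)) (coeffs (.ofSupportFinite f0 h0))
      (coeffs (.ofSupportFinite f1 h1)) =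
    Psi ℏ (coeffs (.ofSupportFinite f0 h0)) (coeffs (.ofSupportFinite f1 h1))
      (coeffs (.ofSupportFinite f2 h2))
  rw [Psi_coeffs, Psi_coeffs, sub_eq_sub_of_cyclic_of_leibniz (tauTriple ℏ) D₁ D₂ D₁_D₂
    (tauTriple_rotate ℏ) (tauTriple_D₁ ℏ) (tauTriple_D₂ ℏ)]
end

section
/- Let f, g : ℝ → ℝ be Schwartz functions and set p = g(u+ℏ)W + f(u) + g(u)W^{-1} in the noncommutative cylinder algebra. Then p* = p, and if g(u)g(u+ℏ) = 0, g(u)(1 − f(u) − f(u−ℏ)) = 0, and g(u)² + g(u+ℏ)² = f(u) − f(u)² for all u ∈ ℝ, then p² = p. -/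
/-- The element `p = g(u+ℏ)W + f(u) + g(u)W⁻¹` in coefficient form. -/
noncomputable def pElem (ℏ : ℝ) (f g : ℝ → ℝ) : ℤ → ℝ → ℂ :=
  fun m u =>
    if m = 1 then ((g (u + ℏ) : ℝ) : ℂ)
    else if m = 0 then ((f u : ℝ) : ℂ)
    else if m = -1 then ((g u : ℝ) : ℂ) else 0

/-- For real-valued `f, g`, `p = g(u+ℏ)W + f(u) + g(u)W⁻¹` is selfadjoint; and if
`g(u)g(u+ℏ) = 0`, `g(u)(1 − f(u) − f(u−ℏ)) = 0` and `g(u)² + g(u+ℏ)² = f(u) − f(u)²`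
for all `u`, then `p² = p`. -/
theorem pElem_projection (ℏ : ℝ) (f g : ℝ → ℝ) :
    ncStar ℏ (pElem ℏ f g) = pElem ℏ f g ∧
    ((∀ u, g u * g (u + ℏ) = 0) →
     (∀ u, g u * (1 - f u - f (u - ℏ)) = 0) →
     (∀ u, g u ^ 2 + g (u + ℏ) ^ 2 = f u - f u ^ 2) →
     ncProd ℏ (pElem ℏ f g) (pElem ℏ f g) = pElem ℏ f g) := by
  constructor
  · funext n u
    rcases eq_or_ne n 1 with rfl | h1
    · norm_num [ncStar, pElem, Complex.conj_ofReal]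
    rcases eq_or_ne n 0 with rfl | h0
    · norm_num [ncStar, pElem, Complex.conj_ofReal]
    rcases eq_or_ne n (-1) with rfl | hm1
    · norm_num [ncStar, pElem, Complex.conj_ofReal]
    · have : ¬(-n = 1) := by omega
      have : ¬(-n = 0) := by omega
      have : ¬(-n = -1) := by omega
      simp only [ncStar, pElem]
      rw [if_neg ‹¬(-n = 1)›, if_neg ‹¬(-n = 0)›, if_neg ‹¬(-n = -1)›,
        if_neg h1, if_neg h0, if_neg hm1, map_zero]
  · intro h1 h2 h3
    funext n u
    have hsum : ncProd ℏ (pElem ℏ f g) (pElem ℏ f g) n u =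
        ∑ k ∈ ({-1, 0, 1} : Finset ℤ),
          pElem ℏ f g k u * pElem ℏ f g (n - k) (u + k * ℏ) := by
      apply tsum_eq_sum
      intro k hk
      simp only [Finset.mem_insert, Finset.mem_singleton] at hk
      push_neg at hk
      have e1 : k ≠ 1 := hk.2.2
      have e0 : k ≠ 0 := hk.2.1
      have em1 : k ≠ -1 := hk.1
      simp only [pElem, if_neg e1, if_neg e0, if_neg em1, zero_mul]
    rw [hsum]
    have hS : ∑ k ∈ ({-1, 0, 1} : Finset ℤ),
        pElem ℏ f g k u * pElem ℏ f g (n - k) (u + k * ℏ) =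
        (g u : ℂ) * pElem ℏ f g (n + 1) (u + (-1) * ℏ)
        + (f u : ℂ) * pElem ℏ f g n u
        + (g (u + ℏ) : ℂ) * pElem ℏ f g (n - 1) (u + 1 * ℏ) := by
      rw [show ({-1, 0, 1} : Finset ℤ) = {(-1 : ℤ)} ∪ {0} ∪ {1} by rfl]
      rw [Finset.sum_union (by decide), Finset.sum_union (by decide)]
      simp only [Finset.sum_singleton]
      norm_num [pElem]
    rw [hS]
    rw [show u + (-1 : ℝ) * ℏ = u - ℏ by ring, show u + (1 : ℝ) * ℏ = u + ℏ by ring]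
    rcases eq_or_ne n 2 with rfl | hn2
    · simp only [pElem]
      norm_num [-mul_eq_zero]
      exact_mod_cast congrArg Complex.ofReal (h1 (u + ℏ))
    rcases eq_or_ne n 1 with rfl | hn1
    · have e2 : g (u + ℏ) * (1 - f (u + ℏ) - f (u + ℏ - ℏ)) = 0 := h2 (u + ℏ)
      simp only [pElem]
      norm_num
      have : f (u + ℏ - ℏ) = f u := by norm_num
      rw [this] at e2
      have : (f u : ℂ) * g (u + ℏ) + g (u + ℏ) * f (u + ℏ) = g (u + ℏ) := by
        have : f u * g (u + ℏ) + g (u + ℏ) * f (u + ℏ) = g (u + ℏ) := by nlinarith [e2]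
        exact_mod_cast this
      linear_combination this
    rcases eq_or_ne n 0 with rfl | hn0
    · simp only [pElem]
      norm_num
      have key : g u * g u + f u * f u + g (u + ℏ) * g (u + ℏ) = f u := by
        nlinarith [h3 u]
      exact_mod_cast congrArg Complex.ofReal key
    rcases eq_or_ne n (-1) with rfl | hnm1
    · simp only [pElem]
      norm_num
      have key : g u * f (u - ℏ) + f u * g u = g u := by nlinarith [h2 u]
      exact_mod_cast congrArg Complex.ofReal key
    rcases eq_or_ne n (-2) with rfl | hnm2
    · simp only [pElem]
      norm_num [-mul_eq_zero]
      have e1 := h1 (u - ℏ)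
      rw [show u - ℏ + ℏ = u by ring] at e1
      have key : g u * g (u - ℏ) = 0 := by rw [mul_comm]; exact e1
      exact_mod_cast congrArg Complex.ofReal key
    · have a1 : ¬(n + 1 = 1) := by omega
      have a2 : ¬(n + 1 = 0) := by omega
      have a3 : ¬(n + 1 = -1) := by omega
      have b1 : ¬(n - 1 = 1) := by omega
      have b2 : ¬(n - 1 = 0) := by omega
      have b3 : ¬(n - 1 = -1) := by omega
      simp only [pElem, if_neg a1, if_neg a2, if_neg a3, if_neg b1, if_neg b2, if_neg b3,
        if_neg hn1, if_neg hn0, if_neg hnm1]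
      ring
end

section
/- With p_n the projection built from n shifted copies as above, the cyclic 2-cocycle evaluates to Ψ(p_n, p_n, p_n) = n. -/
open MeasureTheory

/-- The bump `f`: equal to `f₀` on `[0,ℏ]`, to `1 - f₀(u-ℏ)` on `[ℏ,2ℏ]`, `0` outside. -/
noncomputable def fpiece (ℏ : ℝ) (f0 : ℝ → ℝ) (u : ℝ) : ℝ :=
  if u ≤ 0 ∨ 2 * ℏ ≤ u then 0 else if u ≤ ℏ then f0 u else 1 - f0 (u - ℏ)

/-- The bump `g = √(f - f²)` on `[ℏ,2ℏ]`, `0` outside. -/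
noncomputable def gpiece (ℏ : ℝ) (f0 : ℝ → ℝ) (u : ℝ) : ℝ :=
  if ℏ ≤ u ∧ u ≤ 2 * ℏ then Real.sqrt (fpiece ℏ f0 u - (fpiece ℏ f0 u) ^ 2) else 0

/-- `n` shifted copies of `f`: `f_n(u) = ∑_{k=1}^n f(u - 2(k-1)ℏ)`. -/
noncomputable def fshift (ℏ : ℝ) (f0 : ℝ → ℝ) (n : ℕ) (u : ℝ) : ℝ :=
  ∑ k ∈ Finset.range n, fpiece ℏ f0 (u - 2 * k * ℏ)

/-- `n` shifted copies of `g`. -/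
noncomputable def gshift (ℏ : ℝ) (f0 : ℝ → ℝ) (n : ℕ) (u : ℝ) : ℝ :=
  ∑ k ∈ Finset.range n, gpiece ℏ f0 (u - 2 * k * ℏ)

/-- The projection `p_n = g_n(u+ℏ)W + f_n(u) + g_n(u)W⁻¹` in coefficient form. -/
noncomputable def pN (ℏ : ℝ) (f0 : ℝ → ℝ) (n : ℕ) : ℤ → ℝ → ℂ :=
  fun m u =>
    if m = 1 then ((gshift ℏ f0 n (u + ℏ) : ℝ) : ℂ)
    else if m = 0 then ((fshift ℏ f0 n u : ℝ) : ℂ)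
    else if m = -1 then ((gshift ℏ f0 n u : ℝ) : ℂ) else 0


set_option linter.unusedSectionVars false
set_option maxHeartbeats 1000000




section pieces
variable {ℏ : ℝ} (hℏ : 0 < ℏ) {f0 : ℝ → ℝ} (h00 : f0 0 = 0) (h01 : f0 ℏ = 1)
  (hmono : MonotoneOn f0 (Set.Icc 0 ℏ))

lemma fp_out (u : ℝ) (h : u ≤ 0 ∨ 2 * ℏ ≤ u) : fpiece ℏ f0 u = 0 := by
  simp [fpiece, h]

include hℏ h01 in
lemma fp_h : fpiece ℏ f0 ℏ = 1 := by
  rw [fpiece, if_neg (by push_neg; constructor <;> linarith), if_pos le_rfl, h01]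

lemma fp_2h : fpiece ℏ f0 (2 * ℏ) = 0 := fp_out _ (Or.inr le_rfl)

lemma fp_0 : fpiece ℏ f0 0 = 0 := fp_out _ (Or.inl le_rfl)

include h00 h01 hmono in
lemma f0_mem (u : ℝ) (h0 : 0 ≤ u) (h1 : u ≤ ℏ) : 0 ≤ f0 u ∧ f0 u ≤ 1 := by
  have hh : (0:ℝ) ≤ ℏ := le_trans h0 h1
  constructor
  · rw [← h00]; exact hmono (by simp [hh]) (by simp [h0, h1]) h0
  · rw [← h01]; exact hmono (by simp [h0, h1]) (by simp [hh]) h1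

include h00 h01 hmono in
lemma fp_mem (u : ℝ) : 0 ≤ fpiece ℏ f0 u ∧ fpiece ℏ f0 u ≤ 1 := by
  rw [fpiece]
  split_ifs with h1 h2
  · norm_num
  · push_neg at h1
    exact f0_mem h00 h01 hmono u h1.1.le h2
  · push_neg at h1 h2
    have := f0_mem h00 h01 hmono (u - ℏ) (by linarith) (by linarith [h1.2])
    constructor <;> linarith [this.1, this.2]

include hℏ h00 h01 in
lemma gp_out (u : ℝ) (h : u ≤ ℏ ∨ 2 * ℏ ≤ u) : gpiece ℏ f0 u = 0 := by
  rw [gpiece]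
  rcases h with h | h
  · rcases eq_or_lt_of_le h with rfl | h'
    · rw [if_pos ⟨le_rfl, by linarith⟩, fp_h hℏ h01]
      norm_num
    · rw [if_neg (by push_neg; intro hc; linarith)]
  · rcases eq_or_lt_of_le h with h' | h'
    · rw [if_pos ⟨by linarith, h'.symm.le⟩, ← h', fp_2h]
      norm_num
    · rw [if_neg (by push_neg; intro _; linarith)]

include hℏ h00 h01 in
lemma gp_supp (u : ℝ) (h : gpiece ℏ f0 u ≠ 0) : ℏ < u ∧ u < 2 * ℏ := by
  by_contra hc
  push_neg at hc
  rcases le_or_gt u ℏ with h' | h'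
  · exact h (gp_out hℏ h00 h01 u (Or.inl h'))
  · exact h (gp_out hℏ h00 h01 u (Or.inr (hc h')))

include hℏ h00 h01 hmono in
lemma gp_sq (u : ℝ) (h1 : ℏ ≤ u) (h2 : u ≤ 2 * ℏ) :
    gpiece ℏ f0 u ^ 2 = fpiece ℏ f0 u - fpiece ℏ f0 u ^ 2 := by
  have hnn : 0 ≤ fpiece ℏ f0 u - fpiece ℏ f0 u ^ 2 := by
    have := fp_mem h00 h01 hmono u
    nlinarith [this.1, this.2]
  rw [gpiece, if_pos ⟨h1, h2⟩, sq, Real.mul_self_sqrt hnn]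

include hℏ h01 in
lemma fp_flip (u : ℝ) (h0 : 0 ≤ u) (h1 : u ≤ ℏ) :
    fpiece ℏ f0 (u + ℏ) = 1 - fpiece ℏ f0 u := by
  rcases eq_or_lt_of_le h0 with rfl | h0'
  · rw [zero_add, fp_h hℏ h01, fp_0]; norm_num
  · rcases eq_or_lt_of_le h1 with rfl | h1'
    · rw [fp_h hℏ h01]
      have : u + u = 2 * u := by ring
      rw [this, fp_2h]; norm_num
    · rw [fpiece, if_neg (by push_neg; constructor <;> linarith),
        if_neg (by linarith), fpiece, if_neg (by push_neg; constructor <;> linarith),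
        if_pos h1, add_sub_cancel_right]

include hℏ h00 h01 hmono in
lemma gp_sq' (u : ℝ) (h0 : 0 ≤ u) (h1 : u ≤ ℏ) :
    gpiece ℏ f0 (u + ℏ) ^ 2 = fpiece ℏ f0 u - fpiece ℏ f0 u ^ 2 := by
  rw [gp_sq hℏ h00 h01 hmono (u + ℏ) (by linarith) (by linarith),
    fp_flip hℏ h01 u h0 h1]
  ring

lemma dfp_out (u : ℝ) (h : u < 0 ∨ 2 * ℏ < u) : deriv (fpiece ℏ f0) u = 0 := by
  have hev : fpiece ℏ f0 =ᶠ[nhds u] (fun _ => 0) := by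
    rcases h with h | h
    · filter_upwards [Iio_mem_nhds h] with v hv
      exact fp_out v (Or.inl (le_of_lt hv))
    · filter_upwards [Ioi_mem_nhds h] with v hv
      exact fp_out v (Or.inr (le_of_lt hv))
  rw [hev.deriv_eq, deriv_const]

end pieces



set_option linter.unusedSectionVars false

section shifts
variable {ℏ : ℝ} (hℏ : 0 < ℏ) {f0 : ℝ → ℝ} (h00 : f0 0 = 0) (h01 : f0 ℏ = 1)
  (hmono : MonotoneOn f0 (Set.Icc 0 ℏ))
  (hfsmooth : ContDiff ℝ (⊤ : ℕ∞) (fpiece ℏ f0)) (hgsmooth : ContDiff ℝ (⊤ : ℕ∞) (gpiece ℏ f0))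
  (n : ℕ)

include hfsmooth in
lemma Fsm : ContDiff ℝ (⊤ : ℕ∞) (fshift ℏ f0 n) := by
  apply ContDiff.sum (fun k _ => hfsmooth.comp (contDiff_id.sub contDiff_const))

include hgsmooth in
lemma gsm : ContDiff ℝ (⊤ : ℕ∞) (gshift ℏ f0 n) := by
  apply ContDiff.sum (fun k _ => hgsmooth.comp (contDiff_id.sub contDiff_const))

include hℏ in
lemma F_out (u : ℝ) (h : u ≤ 0 ∨ 2 * n * ℏ ≤ u) : fshift ℏ f0 n u = 0 := by
  apply Finset.sum_eq_zero
  intro k hk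
  have hk' : (k : ℝ) ≤ (n : ℝ) - 1 := by
    have := Finset.mem_range.mp hk
    have : (k : ℝ) + 1 ≤ (n : ℝ) := by exact_mod_cast this
    linarith
  apply fp_out
  rcases h with h | h
  · left; nlinarith [Nat.cast_nonneg (α := ℝ) k]
  · right; nlinarith

include hℏ h00 h01 in
lemma gs_out (u : ℝ) (h : u ≤ ℏ ∨ 2 * n * ℏ ≤ u) : gshift ℏ f0 n u = 0 := by
  apply Finset.sum_eq_zero
  intro k hk
  have hk' : (k : ℝ) ≤ (n : ℝ) - 1 := by
    have := Finset.mem_range.mp hk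
    have : (k : ℝ) + 1 ≤ (n : ℝ) := by exact_mod_cast this
    linarith
  apply gp_out hℏ h00 h01
  rcases h with h | h
  · left; nlinarith [Nat.cast_nonneg (α := ℝ) k]
  · right; nlinarith

include hfsmooth in
lemma dF_eq (u : ℝ) :
    deriv (fshift ℏ f0 n) u = ∑ k ∈ Finset.range n, deriv (fpiece ℏ f0) (u - 2 * k * ℏ) := by
  have : HasDerivAt (fshift ℏ f0 n)
      (∑ k ∈ Finset.range n, deriv (fpiece ℏ f0) (u - 2 * k * ℏ)) u := by
    apply HasDerivAt.fun_sum
    intro k _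
    exact ((hfsmooth.differentiable (by simp) _).hasDerivAt).comp_sub_const u (2 * k * ℏ)
  exact this.deriv

include hℏ h00 h01 in
lemma gp_cross (w : ℝ) (k j : ℕ) (hkj : k ≠ j) :
    gpiece ℏ f0 (w - 2 * k * ℏ) * gpiece ℏ f0 (w - 2 * j * ℏ) = 0 := by
  by_contra hc
  have hk := gp_supp hℏ h00 h01 _ (left_ne_zero_of_mul hc)
  have hj := gp_supp hℏ h00 h01 _ (right_ne_zero_of_mul hc)
  rcases Nat.lt_or_ge k j with h | h
  · have : (k : ℝ) + 1 ≤ (j : ℝ) := by exact_mod_cast h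
    nlinarith [hk.1, hj.2]
  · have h' : j < k := lt_of_le_of_ne h (Ne.symm hkj)
    have : (j : ℝ) + 1 ≤ (k : ℝ) := by exact_mod_cast h'
    nlinarith [hj.1, hk.2]

include hℏ h00 h01 in
lemma gsq (w : ℝ) :
    gshift ℏ f0 n w ^ 2 = ∑ k ∈ Finset.range n, gpiece ℏ f0 (w - 2 * k * ℏ) ^ 2 := by
  rw [sq, gshift, Finset.sum_mul_sum]
  apply Finset.sum_congr rfl
  intro k hk
  rw [Finset.sum_eq_single_of_mem k hk, sq]
  intro j _ hjk
  exact gp_cross hℏ h00 h01 w k j (Ne.symm hjk)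

include hℏ h00 h01 hfsmooth in
lemma collapse1 (u : ℝ) (k : ℕ) (hk : k ∈ Finset.range n) :
    gpiece ℏ f0 (u - 2 * k * ℏ) ^ 2 * deriv (fshift ℏ f0 n) u
      = gpiece ℏ f0 (u - 2 * k * ℏ) ^ 2 * deriv (fpiece ℏ f0) (u - 2 * k * ℏ) := by
  rcases eq_or_ne (gpiece ℏ f0 (u - 2 * k * ℏ)) 0 with h | h
  · rw [h]; ring
  have hsupp := gp_supp hℏ h00 h01 _ h
  rw [dF_eq hfsmooth n u, Finset.mul_sum, Finset.sum_eq_single_of_mem k hk]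
  intro j _ hjk
  have hder : deriv (fpiece ℏ f0) (u - 2 * j * ℏ) = 0 := by
    apply dfp_out
    rcases Nat.lt_or_ge j k with hlt | hge
    · have : (j : ℝ) + 1 ≤ (k : ℝ) := by exact_mod_cast hlt
      right; nlinarith [hsupp.1]
    · have h' : k < j := lt_of_le_of_ne hge (Ne.symm hjk)
      have : (k : ℝ) + 1 ≤ (j : ℝ) := by exact_mod_cast h'
      left; nlinarith [hsupp.2]
  rw [hder, mul_zero]

include hℏ h00 h01 hfsmooth in
lemma collapse2 (u : ℝ) (k : ℕ) (hk : k ∈ Finset.range n) :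
    gpiece ℏ f0 (u + ℏ - 2 * k * ℏ) ^ 2 * deriv (fshift ℏ f0 n) u
      = gpiece ℏ f0 (u + ℏ - 2 * k * ℏ) ^ 2 * deriv (fpiece ℏ f0) (u - 2 * k * ℏ) := by
  rcases eq_or_ne (gpiece ℏ f0 (u + ℏ - 2 * k * ℏ)) 0 with h | h
  · rw [h]; ring
  have hsupp := gp_supp hℏ h00 h01 _ h
  rw [dF_eq hfsmooth n u, Finset.mul_sum, Finset.sum_eq_single_of_mem k hk]
  intro j _ hjk
  have hder : deriv (fpiece ℏ f0) (u - 2 * j * ℏ) = 0 := by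
    apply dfp_out
    rcases Nat.lt_or_ge j k with hlt | hge
    · have : (j : ℝ) + 1 ≤ (k : ℝ) := by exact_mod_cast hlt
      right; nlinarith [hsupp.1]
    · have h' : k < j := lt_of_le_of_ne hge (Ne.symm hjk)
      have : (k : ℝ) + 1 ≤ (j : ℝ) := by exact_mod_cast h'
      left; nlinarith [hsupp.2]
  rw [hder, mul_zero]

end shifts

section integrals
variable {ℏ : ℝ} (hℏ : 0 < ℏ) {f0 : ℝ → ℝ} (h00 : f0 0 = 0) (h01 : f0 ℏ = 1)
  (hmono : MonotoneOn f0 (Set.Icc 0 ℏ))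
  (hfsmooth : ContDiff ℝ (⊤ : ℕ∞) (fpiece ℏ f0)) (hgsmooth : ContDiff ℝ (⊤ : ℕ∞) (gpiece ℏ f0))

include hfsmooth in
lemma keyFTC (a b : ℝ) :
    ∫ v in a..b, (fpiece ℏ f0 v - fpiece ℏ f0 v ^ 2) * deriv (fpiece ℏ f0) v
      = (fpiece ℏ f0 b ^ 2 / 2 - fpiece ℏ f0 b ^ 3 / 3)
        - (fpiece ℏ f0 a ^ 2 / 2 - fpiece ℏ f0 a ^ 3 / 3) := by
  apply intervalIntegral.integral_eq_sub_of_hasDerivAt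
  · intro x _
    have hf : HasDerivAt (fpiece ℏ f0) (deriv (fpiece ℏ f0) x) x :=
      (hfsmooth.differentiable (by simp) x).hasDerivAt
    have h2 := (hf.fun_pow 2).div_const 2
    have h3 := (hf.fun_pow 3).div_const 3
    convert h2.fun_sub h3 using 1
    push_cast
    ring
  · apply Continuous.intervalIntegrable
    exact ((hfsmooth.continuous.sub (hfsmooth.continuous.pow 2)).mul
      (hfsmooth.continuous_deriv (by simp)))

include hℏ h00 h01 hmono hfsmooth in
lemma intL : ∫ v : ℝ, gpiece ℏ f0 v ^ 2 * deriv (fpiece ℏ f0) v = -(1/6) := by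
  rw [← intervalIntegral.integral_eq_integral_of_support_subset
    (a := ℏ) (b := 2*ℏ) (by
      intro v hv
      have hg : gpiece ℏ f0 v ≠ 0 := by
        intro h0
        simp [Function.mem_support, h0] at hv
      have := gp_supp hℏ h00 h01 v hg
      exact ⟨this.1, this.2.le⟩)]
  rw [intervalIntegral.integral_congr (g := fun v =>
      (fpiece ℏ f0 v - fpiece ℏ f0 v ^ 2) * deriv (fpiece ℏ f0) v) (by
    intro v hv
    rw [Set.uIcc_of_le (by linarith)] at hv
    simp only
    rw [gp_sq hℏ h00 h01 hmono v hv.1 hv.2])]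
  rw [keyFTC hfsmooth, fp_h hℏ h01, fp_2h]
  norm_num

include hℏ h00 h01 hmono hfsmooth in
lemma intK : ∫ v : ℝ, gpiece ℏ f0 (v + ℏ) ^ 2 * deriv (fpiece ℏ f0) v = 1/6 := by
  rw [← intervalIntegral.integral_eq_integral_of_support_subset
    (a := 0) (b := ℏ) (by
      intro v hv
      have hg : gpiece ℏ f0 (v + ℏ) ≠ 0 := by
        intro h0
        simp [Function.mem_support, h0] at hv
      have := gp_supp hℏ h00 h01 _ hg
      constructor <;> [linarith [this.1]; linarith [this.2]])]
  rw [intervalIntegral.integral_congr (g := fun v =>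
      (fpiece ℏ f0 v - fpiece ℏ f0 v ^ 2) * deriv (fpiece ℏ f0) v) (by
    intro v hv
    rw [Set.uIcc_of_le (by linarith)] at hv
    simp only
    rw [gp_sq' hℏ h00 h01 hmono v hv.1 hv.2])]
  rw [keyFTC hfsmooth, fp_h hℏ h01, fp_0]
  norm_num

end integrals

section full
variable {ℏ : ℝ} (hℏ : 0 < ℏ) {f0 : ℝ → ℝ} (h00 : f0 0 = 0) (h01 : f0 ℏ = 1)
  (hmono : MonotoneOn f0 (Set.Icc 0 ℏ))
  (hfsmooth : ContDiff ℝ (⊤ : ℕ∞) (fpiece ℏ f0)) (hgsmooth : ContDiff ℝ (⊤ : ℕ∞) (gpiece ℏ f0))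
  (n : ℕ)

include hℏ h00 h01 hgsmooth hfsmooth in
lemma L_integrable (k : ℕ) : Integrable
    (fun u : ℝ => gpiece ℏ f0 (u - 2 * k * ℏ) ^ 2 * deriv (fpiece ℏ f0) (u - 2 * k * ℏ)) := by
  apply Continuous.integrable_of_hasCompactSupport
  · exact (((hgsmooth.continuous.comp (continuous_id.sub continuous_const)).pow 2).mul
      ((hfsmooth.continuous_deriv (by simp)).comp (continuous_id.sub continuous_const)))
  · apply HasCompactSupport.intro (isCompact_Icc (a := ℏ + 2 * k * ℏ) (b := 2 * ℏ + 2 * k * ℏ))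
    intro x hx
    simp only [Set.mem_Icc, not_and_or, not_le] at hx
    have : gpiece ℏ f0 (x - 2 * k * ℏ) = 0 := by
      apply gp_out hℏ h00 h01
      rcases hx with h | h
      · left; linarith
      · right; linarith
    simp [this]

include hℏ h00 h01 hgsmooth hfsmooth in
lemma K_integrable (k : ℕ) : Integrable
    (fun u : ℝ => gpiece ℏ f0 (u + ℏ - 2 * k * ℏ) ^ 2 * deriv (fpiece ℏ f0) (u - 2 * k * ℏ)) := by
  apply Continuous.integrable_of_hasCompactSupport
  · exact (((hgsmooth.continuous.comp (by continuity)).pow 2).mul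
      ((hfsmooth.continuous_deriv (by simp)).comp (continuous_id.sub continuous_const)))
  · apply HasCompactSupport.intro (isCompact_Icc (a := 2 * k * ℏ) (b := ℏ + 2 * k * ℏ))
    intro x hx
    simp only [Set.mem_Icc, not_and_or, not_le] at hx
    have : gpiece ℏ f0 (x + ℏ - 2 * k * ℏ) = 0 := by
      apply gp_out hℏ h00 h01
      rcases hx with h | h
      · left; linarith
      · right; linarith
    simp [this]

include hℏ h00 h01 hmono hgsmooth hfsmooth in
lemma I1_eq : ∫ u : ℝ, gshift ℏ f0 n u ^ 2 * deriv (fshift ℏ f0 n) u = -(n / 6) := by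
  have hpt : (fun u : ℝ => gshift ℏ f0 n u ^ 2 * deriv (fshift ℏ f0 n) u)
      = fun u => ∑ k ∈ Finset.range n,
        gpiece ℏ f0 (u - 2 * k * ℏ) ^ 2 * deriv (fpiece ℏ f0) (u - 2 * k * ℏ) := by
    funext u
    rw [gsq hℏ h00 h01 n u, Finset.sum_mul]
    exact Finset.sum_congr rfl fun k hk => collapse1 hℏ h00 h01 hfsmooth n u k hk
  rw [hpt, integral_finset_sum _ (fun k _ => L_integrable hℏ h00 h01 hfsmooth hgsmooth k)]
  have : ∀ k ∈ Finset.range n,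
      (∫ u : ℝ, gpiece ℏ f0 (u - 2 * k * ℏ) ^ 2 * deriv (fpiece ℏ f0) (u - 2 * k * ℏ))
        = -(1/6) := by
    intro k _
    rw [show (fun u : ℝ => gpiece ℏ f0 (u - 2 * k * ℏ) ^ 2 * deriv (fpiece ℏ f0) (u - 2 * k * ℏ))
      = fun u => (fun v => gpiece ℏ f0 v ^ 2 * deriv (fpiece ℏ f0) v) (u - 2 * k * ℏ) from rfl]
    rw [integral_sub_right_eq_self (fun v => gpiece ℏ f0 v ^ 2 * deriv (fpiece ℏ f0) v)
      (2 * k * ℏ)]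
    exact intL hℏ h00 h01 hmono hfsmooth
  rw [Finset.sum_congr rfl this, Finset.sum_const, Finset.card_range, nsmul_eq_mul]
  ring

include hℏ h00 h01 hmono hgsmooth hfsmooth in
lemma I2_eq : ∫ u : ℝ, gshift ℏ f0 n (u + ℏ) ^ 2 * deriv (fshift ℏ f0 n) u = n / 6 := by
  have hpt : (fun u : ℝ => gshift ℏ f0 n (u + ℏ) ^ 2 * deriv (fshift ℏ f0 n) u)
      = fun u => ∑ k ∈ Finset.range n,
        gpiece ℏ f0 (u + ℏ - 2 * k * ℏ) ^ 2 * deriv (fpiece ℏ f0) (u - 2 * k * ℏ) := by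
    funext u
    rw [gsq hℏ h00 h01 n (u + ℏ), Finset.sum_mul]
    exact Finset.sum_congr rfl fun k hk => collapse2 hℏ h00 h01 hfsmooth n u k hk
  rw [hpt, integral_finset_sum _ (fun k _ => K_integrable hℏ h00 h01 hfsmooth hgsmooth k)]
  have : ∀ k ∈ Finset.range n,
      (∫ u : ℝ, gpiece ℏ f0 (u + ℏ - 2 * k * ℏ) ^ 2 * deriv (fpiece ℏ f0) (u - 2 * k * ℏ))
        = 1/6 := by
    intro k _
    rw [show (fun u : ℝ => gpiece ℏ f0 (u + ℏ - 2 * k * ℏ) ^ 2 * deriv (fpiece ℏ f0) (u - 2 * k * ℏ))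
      = fun u => (fun v => gpiece ℏ f0 (v + ℏ) ^ 2 * deriv (fpiece ℏ f0) v) (u - 2 * k * ℏ) from by
        funext u; ring_nf]
    rw [integral_sub_right_eq_self (fun v => gpiece ℏ f0 (v + ℏ) ^ 2 * deriv (fpiece ℏ f0) v)
      (2 * k * ℏ)]
    exact intK hℏ h00 h01 hmono hfsmooth
  rw [Finset.sum_congr rfl this, Finset.sum_const, Finset.card_range, nsmul_eq_mul]
  ring

end full

section ibp
variable {ℏ : ℝ} (hℏ : 0 < ℏ) {f0 : ℝ → ℝ} (h00 : f0 0 = 0) (h01 : f0 ℏ = 1)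
  (hmono : MonotoneOn f0 (Set.Icc 0 ℏ))
  (hfsmooth : ContDiff ℝ (⊤ : ℕ∞) (fpiece ℏ f0)) (hgsmooth : ContDiff ℝ (⊤ : ℕ∞) (gpiece ℏ f0))
  (n : ℕ)

include hℏ h00 h01 hfsmooth hgsmooth in
lemma ibp1 : (∫ u : ℝ, (deriv (fshift ℏ f0 n) u * gshift ℏ f0 n u ^ 2
    + fshift ℏ f0 n u * (2 * gshift ℏ f0 n u * deriv (gshift ℏ f0 n) u))) = 0 := by
  set F := fshift ℏ f0 n
  set G := gshift ℏ f0 n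
  have hFd : Differentiable ℝ F := (Fsm hfsmooth n).differentiable (by simp)
  have hGd : Differentiable ℝ G := (gsm hgsmooth n).differentiable (by simp)
  have hder : ∀ u : ℝ, HasDerivAt (fun u => F u * G u ^ 2)
      (deriv F u * G u ^ 2 + F u * (2 * G u * deriv G u)) u := by
    intro u
    have h1 := (hFd u).hasDerivAt
    have h2 := ((hGd u).hasDerivAt).fun_pow 2
    refine (h1.fun_mul h2).congr_deriv ?_
    push_cast
    ring
  have hsupp : Function.support (fun u => deriv F u * G u ^ 2
      + F u * (2 * G u * deriv G u)) ⊆ Set.Ioc (-1 : ℝ) (2 * n * ℏ) := by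
    intro u hu
    rw [Function.mem_support] at hu
    by_contra hmem
    simp only [Set.mem_Ioc, not_and_or, not_lt, not_le] at hmem
    have hG : G u = 0 := by
      apply gs_out hℏ h00 h01
      rcases hmem with h | h
      · left; linarith
      · right; linarith
    simp [hG] at hu
  rw [← intervalIntegral.integral_eq_integral_of_support_subset hsupp]
  rw [intervalIntegral.integral_eq_sub_of_hasDerivAt (fun x _ => hder x)
    (by
      apply Continuous.intervalIntegrable
      exact (((Fsm hfsmooth n).continuous_deriv (by simp)).mul ((gsm hgsmooth n).continuous.pow 2)).add
        ((Fsm hfsmooth n).continuous.mul ((continuous_const.mul (gsm hgsmooth n).continuous).mul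
          ((gsm hgsmooth n).continuous_deriv (by simp)))))]
  have h1 : F (2 * n * ℏ) = 0 := F_out hℏ n _ (Or.inr le_rfl)
  have h2 : F (-1) = 0 := F_out hℏ n _ (Or.inl (by norm_num))
  simp [h1, h2]

include hℏ h00 h01 hfsmooth hgsmooth in
lemma ibp2 : (∫ u : ℝ, (deriv (fshift ℏ f0 n) u * gshift ℏ f0 n (u + ℏ) ^ 2
    + fshift ℏ f0 n u * (2 * gshift ℏ f0 n (u + ℏ) * deriv (gshift ℏ f0 n) (u + ℏ)))) = 0 := by
  set F := fshift ℏ f0 n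
  set G := gshift ℏ f0 n
  have hFd : Differentiable ℝ F := (Fsm hfsmooth n).differentiable (by simp)
  have hGd : Differentiable ℝ G := (gsm hgsmooth n).differentiable (by simp)
  have hder : ∀ u : ℝ, HasDerivAt (fun u => F u * G (u + ℏ) ^ 2)
      (deriv F u * G (u + ℏ) ^ 2 + F u * (2 * G (u + ℏ) * deriv G (u + ℏ))) u := by
    intro u
    have h1 := (hFd u).hasDerivAt
    have h2 := (((hGd (u + ℏ)).hasDerivAt).comp_add_const u ℏ).fun_pow 2
    refine (h1.fun_mul h2).congr_deriv ?_
    push_cast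
    ring
  have hsupp : Function.support (fun u => deriv F u * G (u + ℏ) ^ 2
      + F u * (2 * G (u + ℏ) * deriv G (u + ℏ))) ⊆ Set.Ioc (-1 : ℝ) (2 * n * ℏ) := by
    intro u hu
    rw [Function.mem_support] at hu
    by_contra hmem
    simp only [Set.mem_Ioc, not_and_or, not_lt, not_le] at hmem
    have hG : G (u + ℏ) = 0 := by
      apply gs_out hℏ h00 h01
      rcases hmem with h | h
      · left; linarith
      · right; linarith
    simp [hG] at hu
  rw [← intervalIntegral.integral_eq_integral_of_support_subset hsupp]
  rw [intervalIntegral.integral_eq_sub_of_hasDerivAt (fun x _ => hder x)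
    (by
      apply Continuous.intervalIntegrable
      have hGc : Continuous fun u : ℝ => G (u + ℏ) :=
        (gsm hgsmooth n).continuous.comp (by continuity)
      have hdGc : Continuous fun u : ℝ => deriv G (u + ℏ) :=
        ((gsm hgsmooth n).continuous_deriv (by simp)).comp (by continuity)
      exact (((Fsm hfsmooth n).continuous_deriv (by simp)).mul (hGc.pow 2)).add
        ((Fsm hfsmooth n).continuous.mul ((continuous_const.mul hGc).mul hdGc)))]
  have h1 : F (2 * n * ℏ) = 0 := F_out hℏ n _ (Or.inr le_rfl)
  have h2 : F (-1) = 0 := F_out hℏ n _ (Or.inl (by norm_num))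
  simp [h1, h2]

end ibp



lemma oderiv (r : ℝ → ℝ) (u : ℝ) (hr : DifferentiableAt ℝ r u) :
    deriv (fun x => ((r x : ℝ) : ℂ)) u = ((deriv r u : ℝ) : ℂ) :=
  (hr.hasDerivAt.ofReal_comp).deriv

section expand
variable {ℏ : ℝ} (P : ℤ → ℝ → ℂ)
  (hPz : ∀ m : ℤ, m ≠ 1 → m ≠ 0 → m ≠ -1 → P m = 0)

include hPz in
lemma hQ (B : ℤ → ℝ → ℂ) (k : ℤ) (u : ℝ) : ncProd ℏ P B k u
    = P (-1) u * B (k - -1) (u + (-1 : ℤ) * ℏ)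
      + (P 0 u * B (k - 0) (u + (0 : ℤ) * ℏ) + P 1 u * B (k - 1) (u + (1 : ℤ) * ℏ)) := by
  rw [ncProd]
  rw [tsum_eq_sum (s := ({-1, 0, 1} : Finset ℤ)) (by
    intro j hj
    simp only [Finset.mem_insert, Finset.mem_singleton, not_or] at hj
    rw [hPz j hj.2.2 hj.2.1 hj.1]
    simp)]
  rw [Finset.sum_insert (by decide), Finset.sum_insert (by decide), Finset.sum_singleton]

include hPz in
lemma hOuter (B C : ℤ → ℝ → ℂ)
    (hC : ∀ m : ℤ, m ≠ 1 → m ≠ 0 → m ≠ -1 → (∀ v, C m v = 0)) (u : ℝ) :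
    ncProd ℏ (ncProd ℏ P B) C 0 u
    = ncProd ℏ P B (-1) u * C (0 - -1) (u + (-1 : ℤ) * ℏ)
      + (ncProd ℏ P B 0 u * C (0 - 0) (u + (0 : ℤ) * ℏ)
        + ncProd ℏ P B 1 u * C (0 - 1) (u + (1 : ℤ) * ℏ)) := by
  rw [show ncProd ℏ (ncProd ℏ P B) C 0 u
    = ∑' k : ℤ, ncProd ℏ P B k u * C (0 - k) (u + k * ℏ) from rfl]
  rw [tsum_eq_sum (s := ({-1, 0, 1} : Finset ℤ)) (by
    intro j hj
    simp only [Finset.mem_insert, Finset.mem_singleton, not_or] at hj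
    rw [hC (0 - j) (by omega) (by omega) (by omega)]
    simp)]
  rw [Finset.sum_insert (by decide), Finset.sum_insert (by decide), Finset.sum_singleton]

end expand

/-- The cyclic 2-cocycle evaluated on the projection `p_n` equals `n`. -/
theorem Psi_pN (ℏ : ℝ) (hℏ : 0 < ℏ) (f0 : ℝ → ℝ)
    (hf0 : ContDiff ℝ (⊤ : ℕ∞) f0) (h00 : f0 0 = 0) (h01 : f0 ℏ = 1)
    (hmono : MonotoneOn f0 (Set.Icc 0 ℏ))
    (hfsmooth : ContDiff ℝ (⊤ : ℕ∞) (fpiece ℏ f0)) (hgsmooth : ContDiff ℝ (⊤ : ℕ∞) (gpiece ℏ f0))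
    (n : ℕ) (hn : 1 ≤ n) :
    Psi ℏ (pN ℏ f0 n) (pN ℏ f0 n) (pN ℏ f0 n) = (n : ℂ) := by
  classical
  have hFsm : ContDiff ℝ (⊤ : ℕ∞) (fshift ℏ f0 n) := Fsm hfsmooth n
  have hGsm : ContDiff ℝ (⊤ : ℕ∞) (gshift ℏ f0 n) := gsm hgsmooth n
  have hFd : Differentiable ℝ (fshift ℏ f0 n) := hFsm.differentiable (by simp)
  have hGd : Differentiable ℝ (gshift ℏ f0 n) := hGsm.differentiable (by simp)
  have hFc : Continuous (fshift ℏ f0 n) := hFsm.continuous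
  have hGc : Continuous (gshift ℏ f0 n) := hGsm.continuous
  have hdFc : Continuous (deriv (fshift ℏ f0 n)) := hFsm.continuous_deriv (by simp)
  have hdGc : Continuous (deriv (gshift ℏ f0 n)) := hGsm.continuous_deriv (by simp)
  have haddc : Continuous (fun u : ℝ => u + ℏ) := continuous_id.add continuous_const
  have hsubc : Continuous (fun u : ℝ => u - ℏ) := continuous_id.sub continuous_const
  have hPz : ∀ m : ℤ, m ≠ 1 → m ≠ 0 → m ≠ -1 → pN ℏ f0 n m = 0 := by
    intro m h1 h2 h3; funext v; simp [pN, h1, h2, h3]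
  have hP1 : pN ℏ f0 n 1 = fun v => ((gshift ℏ f0 n (v + ℏ) : ℝ) : ℂ) := by
    funext v; simp [pN]
  have hP0 : pN ℏ f0 n 0 = fun v => ((fshift ℏ f0 n v : ℝ) : ℂ) := by
    funext v; norm_num [pN]
  have hPm1 : pN ℏ f0 n (-1) = fun v => ((gshift ℏ f0 n v : ℝ) : ℂ) := by
    funext v; norm_num [pN]
  have hd1P1 : d1 (pN ℏ f0 n) 1 = fun v => ((deriv (gshift ℏ f0 n) (v + ℏ) : ℝ) : ℂ) := by
    funext v
    show deriv (pN ℏ f0 n 1) v = _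
    rw [hP1, oderiv (fun w => gshift ℏ f0 n (w + ℏ)) v
      ((DifferentiableAt.comp (g := gshift ℏ f0 n) (f := fun w : ℝ => w + ℏ) v (hGd (v + ℏ)) ((differentiable_id.add_const ℏ) v)))]
    rw [deriv_comp_add_const]
  have hd1P0 : d1 (pN ℏ f0 n) 0 = fun v => ((deriv (fshift ℏ f0 n) v : ℝ) : ℂ) := by
    funext v
    show deriv (pN ℏ f0 n 0) v = _
    rw [hP0, oderiv _ v (hFd v)]
  have hd1Pm1 : d1 (pN ℏ f0 n) (-1) = fun v => ((deriv (gshift ℏ f0 n) v : ℝ) : ℂ) := by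
    funext v
    show deriv (pN ℏ f0 n (-1)) v = _
    rw [hPm1, oderiv _ v (hGd v)]
  have hd1P2 : d1 (pN ℏ f0 n) 2 = fun _ => (0 : ℂ) := by
    funext v
    show deriv (pN ℏ f0 n 2) v = _
    rw [hPz 2 (by decide) (by decide) (by decide)]
    simp only [Pi.zero_def, deriv_const']
  have hd1Pm2 : d1 (pN ℏ f0 n) (-2) = fun _ => (0 : ℂ) := by
    funext v
    show deriv (pN ℏ f0 n (-2)) v = _
    rw [hPz (-2) (by decide) (by decide) (by decide)]
    simp only [Pi.zero_def, deriv_const']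
  have hP2 : pN ℏ f0 n 2 = 0 := hPz 2 (by decide) (by decide) (by decide)
  have hPm2 : pN ℏ f0 n (-2) = 0 := hPz (-2) (by decide) (by decide) (by decide)
  have hd2z : ∀ m : ℤ, m ≠ 1 → m ≠ 0 → m ≠ -1 → ∀ v, d2 (pN ℏ f0 n) m v = 0 := by
    intro m h1 h2 h3 v
    show 2 * Real.pi * Complex.I * m * pN ℏ f0 n m v = 0
    rw [hPz m h1 h2 h3]
    simp
  have hd1z : ∀ m : ℤ, m ≠ 1 → m ≠ 0 → m ≠ -1 → ∀ v, d1 (pN ℏ f0 n) m v = 0 := by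
    intro m h1 h2 h3 v
    show deriv (pN ℏ f0 n m) v = 0
    rw [hPz m h1 h2 h3]
    simp only [Pi.zero_def, deriv_const']
  -- the two real integrands
  set SA : ℝ → ℝ := fun u =>
    (-(fshift ℏ f0 n u * gshift ℏ f0 n (u + ℏ) * deriv (gshift ℏ f0 n) (u + ℏ))
      - gshift ℏ f0 n (u + ℏ) ^ 2 * deriv (fshift ℏ f0 n) (u + ℏ))
    + (fshift ℏ f0 n u * gshift ℏ f0 n u * deriv (gshift ℏ f0 n) u
      + gshift ℏ f0 n u ^ 2 * deriv (fshift ℏ f0 n) (u - ℏ)) with hSA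
  set SB : ℝ → ℝ := fun u =>
    (gshift ℏ f0 n u ^ 2 * deriv (fshift ℏ f0 n) u
      + fshift ℏ f0 n u * gshift ℏ f0 n (u + ℏ) * deriv (gshift ℏ f0 n) (u + ℏ))
    - (fshift ℏ f0 n u * gshift ℏ f0 n u * deriv (gshift ℏ f0 n) u
      + gshift ℏ f0 n (u + ℏ) ^ 2 * deriv (fshift ℏ f0 n) u) with hSB
  have hA : ∀ u : ℝ, ncProd ℏ (ncProd ℏ (pN ℏ f0 n) (d1 (pN ℏ f0 n))) (d2 (pN ℏ f0 n)) 0 u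
      = 2 * Real.pi * Complex.I * ((SA u : ℝ) : ℂ) := by
    intro u
    rw [hOuter (pN ℏ f0 n) hPz (d1 (pN ℏ f0 n)) (d2 (pN ℏ f0 n)) hd2z u,
      hQ (pN ℏ f0 n) hPz, hQ (pN ℏ f0 n) hPz, hQ (pN ℏ f0 n) hPz]
    norm_num only
    simp only [d2, hP1, hP0, hPm1, hP2, hPm2, hd1P1, hd1P0, hd1Pm1, hd1P2, hd1Pm2, Pi.zero_apply, mul_zero, zero_mul, hSA]
    push_cast
    ring_nf
  have hB : ∀ u : ℝ, ncProd ℏ (ncProd ℏ (pN ℏ f0 n) (d2 (pN ℏ f0 n))) (d1 (pN ℏ f0 n)) 0 u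
      = 2 * Real.pi * Complex.I * ((SB u : ℝ) : ℂ) := by
    intro u
    rw [hOuter (pN ℏ f0 n) hPz (d2 (pN ℏ f0 n)) (d1 (pN ℏ f0 n)) hd1z u,
      hQ (pN ℏ f0 n) hPz, hQ (pN ℏ f0 n) hPz, hQ (pN ℏ f0 n) hPz]
    norm_num only
    simp only [d2, hP1, hP0, hPm1, hP2, hPm2, hd1P1, hd1P0, hd1Pm1, hd1P2, hd1Pm2, Pi.zero_apply, mul_zero, zero_mul, hSB]
    push_cast
    ring_nf
  -- integrability helper
  have mkInt : ∀ A : ℝ → ℝ, Continuous A → (∀ u, u ≤ -ℏ ∨ 2 * n * ℏ ≤ u → A u = 0)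
      → Integrable A := by
    intro A hc hz
    apply hc.integrable_of_hasCompactSupport
    apply HasCompactSupport.intro (isCompact_Icc (a := -ℏ) (b := 2 * n * ℏ))
    intro x hx
    simp only [Set.mem_Icc, not_and_or, not_le] at hx
    rcases hx with h | h
    · exact hz x (Or.inl h.le)
    · exact hz x (Or.inr h.le)
  have hGz : ∀ u : ℝ, u ≤ -ℏ ∨ 2 * n * ℏ ≤ u → gshift ℏ f0 n u = 0 := by
    intro u h
    apply gs_out hℏ h00 h01
    rcases h with h | h
    · left; linarith
    · right; linarith
  have hGz' : ∀ u : ℝ, u ≤ -ℏ ∨ 2 * n * ℏ ≤ u → gshift ℏ f0 n (u + ℏ) = 0 := by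
    intro u h
    apply gs_out hℏ h00 h01
    rcases h with h | h
    · left; linarith
    · right; linarith
  have hi_t1 : Integrable (fun u : ℝ => fshift ℏ f0 n u * gshift ℏ f0 n (u + ℏ)
      * deriv (gshift ℏ f0 n) (u + ℏ)) := by
    refine mkInt _ ?_ ?_
    exact  (hFc.mul (hGc.comp haddc)).mul (hdGc.comp haddc)
    intro u h; rw [hGz' u h]; ring
  have hi_t2 : Integrable (fun u : ℝ => gshift ℏ f0 n (u + ℏ) ^ 2
      * deriv (fshift ℏ f0 n) (u + ℏ)) := by
    refine mkInt _ ?_ ?_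
    exact  ((hGc.comp haddc).pow 2).mul (hdFc.comp haddc)
    intro u h; rw [hGz' u h]; ring
  have hi_t3 : Integrable (fun u : ℝ => fshift ℏ f0 n u * gshift ℏ f0 n u
      * deriv (gshift ℏ f0 n) u) := by
    refine mkInt _ ?_ ?_
    exact  (hFc.mul hGc).mul hdGc
    intro u h; rw [hGz u h]; ring
  have hi_t4 : Integrable (fun u : ℝ => gshift ℏ f0 n u ^ 2
      * deriv (fshift ℏ f0 n) (u - ℏ)) := by
    refine mkInt _ ?_ ?_
    exact  (hGc.pow 2).mul (hdFc.comp hsubc)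
    intro u h; rw [hGz u h]; ring
  have hi_s1 : Integrable (fun u : ℝ => gshift ℏ f0 n u ^ 2 * deriv (fshift ℏ f0 n) u) := by
    refine mkInt _ ?_ ?_
    exact  (hGc.pow 2).mul hdFc
    intro u h; rw [hGz u h]; ring
  have hi_s4 : Integrable (fun u : ℝ => gshift ℏ f0 n (u + ℏ) ^ 2
      * deriv (fshift ℏ f0 n) u) := by
    refine mkInt _ ?_ ?_
    exact  ((hGc.comp haddc).pow 2).mul hdFc
    intro u h; rw [hGz' u h]; ring
  -- values of the basic integrals
  have hs1 : (∫ u : ℝ, gshift ℏ f0 n u ^ 2 * deriv (fshift ℏ f0 n) u) = -(n / 6) :=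
    I1_eq hℏ h00 h01 hmono hfsmooth hgsmooth n
  have hs4 : (∫ u : ℝ, gshift ℏ f0 n (u + ℏ) ^ 2 * deriv (fshift ℏ f0 n) u) = n / 6 :=
    I2_eq hℏ h00 h01 hmono hfsmooth hgsmooth n
  have ht2 : (∫ u : ℝ, gshift ℏ f0 n (u + ℏ) ^ 2 * deriv (fshift ℏ f0 n) (u + ℏ)) = -(n / 6) := by
    rw [show (fun u : ℝ => gshift ℏ f0 n (u + ℏ) ^ 2 * deriv (fshift ℏ f0 n) (u + ℏ))
      = fun u : ℝ => (fun v => gshift ℏ f0 n v ^ 2 * deriv (fshift ℏ f0 n) v) (u + ℏ) from rfl]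
    rw [integral_add_right_eq_self (fun v => gshift ℏ f0 n v ^ 2 * deriv (fshift ℏ f0 n) v) ℏ]
    exact hs1
  have ht4 : (∫ u : ℝ, gshift ℏ f0 n u ^ 2 * deriv (fshift ℏ f0 n) (u - ℏ)) = n / 6 := by
    have : (fun u : ℝ => gshift ℏ f0 n (u + ℏ) ^ 2 * deriv (fshift ℏ f0 n) u)
        = fun u : ℝ => (fun v => gshift ℏ f0 n v ^ 2 * deriv (fshift ℏ f0 n) (v - ℏ)) (u + ℏ) := by
      funext u; simp
    rw [this, integral_add_right_eq_self
      (fun v => gshift ℏ f0 n v ^ 2 * deriv (fshift ℏ f0 n) (v - ℏ)) ℏ] at hs4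
    exact hs4
  -- integration by parts consequences
  have ht3 : (∫ u : ℝ, fshift ℏ f0 n u * gshift ℏ f0 n u * deriv (gshift ℏ f0 n) u)
      = n / 12 := by
    have h0 := ibp1 hℏ h00 h01 hfsmooth hgsmooth n
    have hsplit : Integrable (fun u : ℝ => deriv (fshift ℏ f0 n) u * gshift ℏ f0 n u ^ 2) := by
      refine mkInt _ ?_ ?_
      exact  hdFc.mul (hGc.pow 2)
      intro u h; rw [hGz u h]; ring
    have hsplit2 : Integrable (fun u : ℝ => fshift ℏ f0 n u
        * (2 * gshift ℏ f0 n u * deriv (gshift ℏ f0 n) u)) := by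
      refine mkInt _ ?_ ?_
      exact  hFc.mul ((continuous_const.mul hGc).mul hdGc)
      intro u h; rw [hGz u h]; ring
    rw [integral_add hsplit hsplit2] at h0
    have e1 : (∫ u : ℝ, deriv (fshift ℏ f0 n) u * gshift ℏ f0 n u ^ 2) = -(n/6) := by
      rw [show (fun u : ℝ => deriv (fshift ℏ f0 n) u * gshift ℏ f0 n u ^ 2)
        = fun u : ℝ => gshift ℏ f0 n u ^ 2 * deriv (fshift ℏ f0 n) u from by funext u; ring]
      exact hs1
    have e2 : (∫ u : ℝ, fshift ℏ f0 n u * (2 * gshift ℏ f0 n u * deriv (gshift ℏ f0 n) u))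
        = 2 * ∫ u : ℝ, fshift ℏ f0 n u * gshift ℏ f0 n u * deriv (gshift ℏ f0 n) u := by
      rw [show (fun u : ℝ => fshift ℏ f0 n u * (2 * gshift ℏ f0 n u * deriv (gshift ℏ f0 n) u))
        = fun u : ℝ => 2 * (fshift ℏ f0 n u * gshift ℏ f0 n u * deriv (gshift ℏ f0 n) u) from by
          funext u; ring]
      exact integral_const_mul 2 _
    rw [e1, e2] at h0
    linarith
  have ht1 : (∫ u : ℝ, fshift ℏ f0 n u * gshift ℏ f0 n (u + ℏ) * deriv (gshift ℏ f0 n) (u + ℏ))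
      = -(n / 12) := by
    have h0 := ibp2 hℏ h00 h01 hfsmooth hgsmooth n
    have hsplit : Integrable (fun u : ℝ => deriv (fshift ℏ f0 n) u
        * gshift ℏ f0 n (u + ℏ) ^ 2) := by
      refine mkInt _ ?_ ?_
      exact  hdFc.mul ((hGc.comp haddc).pow 2)
      intro u h; rw [hGz' u h]; ring
    have hsplit2 : Integrable (fun u : ℝ => fshift ℏ f0 n u
        * (2 * gshift ℏ f0 n (u + ℏ) * deriv (gshift ℏ f0 n) (u + ℏ))) := by
      refine mkInt _ ?_ ?_
      · exact hFc.mul ((continuous_const.mul (hGc.comp haddc)).mul (hdGc.comp haddc))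
      · intro u h; rw [hGz' u h]; ring
    rw [integral_add hsplit hsplit2] at h0
    have e1 : (∫ u : ℝ, deriv (fshift ℏ f0 n) u * gshift ℏ f0 n (u + ℏ) ^ 2) = n/6 := by
      rw [show (fun u : ℝ => deriv (fshift ℏ f0 n) u * gshift ℏ f0 n (u + ℏ) ^ 2)
        = fun u : ℝ => gshift ℏ f0 n (u + ℏ) ^ 2 * deriv (fshift ℏ f0 n) u from by
          funext u; ring]
      exact hs4
    have e2 : (∫ u : ℝ, fshift ℏ f0 n u
        * (2 * gshift ℏ f0 n (u + ℏ) * deriv (gshift ℏ f0 n) (u + ℏ)))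
        = 2 * ∫ u : ℝ, fshift ℏ f0 n u * gshift ℏ f0 n (u + ℏ)
            * deriv (gshift ℏ f0 n) (u + ℏ) := by
      rw [show (fun u : ℝ => fshift ℏ f0 n u
          * (2 * gshift ℏ f0 n (u + ℏ) * deriv (gshift ℏ f0 n) (u + ℏ)))
        = fun u : ℝ => 2 * (fshift ℏ f0 n u * gshift ℏ f0 n (u + ℏ)
            * deriv (gshift ℏ f0 n) (u + ℏ)) from by funext u; ring]
      exact integral_const_mul 2 _
    rw [e1, e2] at h0
    linarith
  -- integrals of SA and SB
  have hIA : (∫ u : ℝ, SA u) = (n : ℝ) / 2 := by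
    rw [hSA]
    have h12 : Integrable (fun u : ℝ =>
        -(fshift ℏ f0 n u * gshift ℏ f0 n (u + ℏ) * deriv (gshift ℏ f0 n) (u + ℏ))
          - gshift ℏ f0 n (u + ℏ) ^ 2 * deriv (fshift ℏ f0 n) (u + ℏ)) := hi_t1.neg.sub hi_t2
    have h34 : Integrable (fun u : ℝ =>
        fshift ℏ f0 n u * gshift ℏ f0 n u * deriv (gshift ℏ f0 n) u
          + gshift ℏ f0 n u ^ 2 * deriv (fshift ℏ f0 n) (u - ℏ)) := hi_t3.add hi_t4
    have hn1 : Integrable (fun u : ℝ =>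
        -(fshift ℏ f0 n u * gshift ℏ f0 n (u + ℏ) * deriv (gshift ℏ f0 n) (u + ℏ))) := hi_t1.neg
    rw [integral_add h12 h34, integral_sub hn1 hi_t2, integral_add hi_t3 hi_t4, integral_neg]
    rw [ht1, ht2, ht3, ht4]
    ring
  have hIB : (∫ u : ℝ, SB u) = -((n : ℝ) / 2) := by
    rw [hSB]
    have h12 : Integrable (fun u : ℝ =>
        gshift ℏ f0 n u ^ 2 * deriv (fshift ℏ f0 n) u
          + fshift ℏ f0 n u * gshift ℏ f0 n (u + ℏ) * deriv (gshift ℏ f0 n) (u + ℏ)) :=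
      hi_s1.add hi_t1
    have h34 : Integrable (fun u : ℝ =>
        fshift ℏ f0 n u * gshift ℏ f0 n u * deriv (gshift ℏ f0 n) u
          + gshift ℏ f0 n (u + ℏ) ^ 2 * deriv (fshift ℏ f0 n) u) := hi_t3.add hi_s4
    rw [integral_sub h12 h34, integral_add hi_s1 hi_t1, integral_add hi_t3 hi_s4]
    rw [hs1, ht1, ht3, hs4]
    ring
  -- assemble
  have h2pi : (2 * (Real.pi : ℂ) * Complex.I) ≠ 0 := by
    simp [Real.pi_ne_zero, Complex.I_ne_zero, Complex.ofReal_ne_zero]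
  have hTauA : tau (ncProd ℏ (ncProd ℏ (pN ℏ f0 n) (d1 (pN ℏ f0 n))) (d2 (pN ℏ f0 n)))
      = 2 * Real.pi * Complex.I * (((n : ℝ) / 2 : ℝ) : ℂ) := by
    rw [tau]
    rw [integral_congr_ae (Filter.Eventually.of_forall hA)]
    rw [integral_const_mul]
    have hoR : (∫ u : ℝ, ((SA u : ℝ) : ℂ)) = (((∫ u : ℝ, SA u) : ℝ) : ℂ) := integral_ofReal
    rw [hoR, hIA]
  have hTauB : tau (ncProd ℏ (ncProd ℏ (pN ℏ f0 n) (d2 (pN ℏ f0 n))) (d1 (pN ℏ f0 n)))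
      = 2 * Real.pi * Complex.I * ((-((n : ℝ) / 2) : ℝ) : ℂ) := by
    rw [tau]
    rw [integral_congr_ae (Filter.Eventually.of_forall hB)]
    rw [integral_const_mul]
    have hoR : (∫ u : ℝ, ((SB u : ℝ) : ℂ)) = (((∫ u : ℝ, SB u) : ℝ) : ℂ) := integral_ofReal
    rw [hoR, hIB]
  rw [Psi, hTauA, hTauB]
  rw [← mul_sub, inv_mul_cancel_left₀ h2pi]
  push_cast
  ring
end

section
/- If λ₀, λ₁, ε, ℏ ∈ ℝ and r ∈ ℤ satisfy λ₀ε + λ₁r = −ℏ, then the action (f·ξ)(x,k) = Σ_n f_n(λ₀x + λ₁k) ξ(x − nε, k − nr) makes the Schwartz space S(ℝ×ℤ) a left module over the noncommutative cylinder algebra C_ℏ^∞: (f •_ℏ g)·ξ = f·(g·ξ). -/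
open Pointwise

/-- The left action `(f·ξ)(x,k) = ∑_n f_n(λ₀x + λ₁k) ξ(x − nε, k − nr)`. -/
noncomputable def leftAct (l0 l1 ε : ℝ) (r : ℤ) (f : ℤ → ℝ → ℂ) (ξ : ℝ → ℤ → ℂ) :
    ℝ → ℤ → ℂ :=
  fun x k => ∑' n : ℤ, f n (l0 * x + l1 * k) * ξ (x - n * ε) (k - n * r)

/-- If `λ₀ε + λ₁r = −ℏ`, the action is a left module action: `(f •_ℏ g)·ξ = f·(g·ξ)`. -/
theorem leftAct_module (ℏ l0 l1 ε : ℝ) (r : ℤ) (hpar : l0 * ε + l1 * r = -ℏ)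
    (f g : ℤ → ℝ → ℂ)
    (hf : (Function.support f).Finite) (hg : (Function.support g).Finite)
    (ξ : ℝ → ℤ → ℂ) :
    leftAct l0 l1 ε r (ncProd ℏ f g) ξ = leftAct l0 l1 ε r f (leftAct l0 l1 ε r g ξ) := by
  classical
  funext x m
  set u : ℝ := l0 * x + l1 * m with hu
  set S : Finset ℤ := hf.toFinset with hS
  set T : Finset ℤ := hg.toFinset with hT
  set F : ℤ → ℤ → ℂ := fun j n =>
    f j u * g (n - j) (u + j * ℏ) * ξ (x - n * ε) (m - n * r) with hF
  have hFj : ∀ j ∉ S, ∀ n, F j n = 0 := by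
    intro j hj n
    have : f j = 0 := by
      by_contra h
      exact hj (hf.mem_toFinset.2 (by simp [Function.mem_support, h]))
    simp [hF, this]
  have hFn : ∀ j, ∀ n ∉ Finset.image (j + ·) T, F j n = 0 := by
    intro j n hn
    have : g (n - j) = 0 := by
      by_contra h
      exact hn (Finset.mem_image.2 ⟨n - j, hg.mem_toFinset.2
        (by simp [Function.mem_support, h]), by ring⟩)
    simp [hF, this]
  have hsum1 : ∀ n, Summable (fun j => F j n) := fun n =>
    summable_of_ne_finset_zero (s := S) (fun j hj => hFj j hj n)
  have hsum2 : ∀ j, Summable (F j) := fun j =>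
    summable_of_ne_finset_zero (s := Finset.image (j + ·) T) (hFn j)
  have hsumU : Summable (Function.uncurry F) := by
    apply summable_of_ne_finset_zero (s := S ×ˢ (S + T))
    rintro ⟨j, n⟩ hjn
    by_contra h
    apply hjn
    rw [Finset.mem_product]
    have hj : j ∈ S := by
      by_contra hj; exact h (hFj j hj n)
    have hn : n ∈ Finset.image (j + ·) T := by
      by_contra hn; exact h (hFn j n hn)
    obtain ⟨t, ht, rfl⟩ := Finset.mem_image.1 hn
    exact ⟨hj, Finset.add_mem_add hj ht⟩
  have lhs_eq : leftAct l0 l1 ε r (ncProd ℏ f g) ξ x m = ∑' n : ℤ, ∑' j : ℤ, F j n := by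
    unfold leftAct ncProd
    rw [← hu]
    congr 1; funext n
    rw [← tsum_mul_right]
  rw [lhs_eq, Summable.tsum_comm' hsumU hsum2 hsum1]
  unfold leftAct
  rw [← hu]
  congr 1; funext j
  have reindex : ∑' n : ℤ, F j n = ∑' p : ℤ, F j (j + p) :=
    ((Equiv.addLeft j).tsum_eq (F j)).symm
  rw [reindex, ← tsum_mul_left]
  congr 1; funext p
  have harg : l0 * (x - j * ε) + l1 * ((m - j * r : ℤ) : ℝ) = u + j * ℏ := by
    push_cast
    have : (j : ℝ) * (l0 * ε + l1 * r) = (j : ℝ) * (-ℏ) := by rw [hpar]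
    nlinarith [this]
  rw [harg]
  simp only [hF, add_sub_cancel_left]
  rw [mul_assoc]
  congr 2
  · congr 1 <;> push_cast <;> ring
end

section
/- For the left module action with λ₀ε + λ₁r = −ℏ, the sesquilinear form (ξ,η)_L = Σ_k ∫_ℝ ξ(x,k) conj(η(x,k)) dx satisfies (f·ξ, η)_L = (ξ, f*·η)_L for all f in the algebra. -/
open MeasureTheory

/-- The sesquilinear form `(ξ,η)_L = ∑_k ∫ ξ(x,k) conj(η(x,k)) dx`. -/
noncomputable def innL (ξ η : ℝ → ℤ → ℂ) : ℂ :=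
  ∑' k : ℤ, ∫ x : ℝ, ξ x k * starRingEnd ℂ (η x k)

/-- Schwartz-type decay on `ℝ × ℤ`: continuity in `x` and rapid joint decay. -/
def NCDecay (ξ : ℝ → ℤ → ℂ) : Prop :=
  (∀ k : ℤ, Continuous fun x => ξ x k) ∧
  ∀ N : ℕ, ∃ C : ℝ, ∀ (x : ℝ) (k : ℤ),
    (1 + |x| + |(k : ℝ)|) ^ N * ‖ξ x k‖ ≤ C

/-!
Both sides are finite sums over the support of `f`. In the `n`-th term on the left, the
translation `(x, k) ↦ (x + nε, k + nr)`, which preserves Lebesgue measure times counting measure,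
turns `f_n(λ₀x + λ₁k)` into `f_n(λ₀x + λ₁k − nℏ)` because `λ₀ε + λ₁r = −ℏ`; the result is the
`(−n)`-th term on the right. Rapid decay of `ξ` and `η` makes each term integrable in `x` and
summable in `k`, which justifies exchanging the finite sum with `∑_k ∫ dx`.
-/

open scoped BoundedContinuousFunction

lemma NCDecay.exists_norm_le {ξ : ℝ → ℤ → ℂ} (hξ : NCDecay ξ) :
    ∃ C : ℝ, ∀ (x : ℝ) (k : ℤ), ‖ξ x k‖ ≤ C := by
  obtain ⟨C, hC⟩ := hξ.2 0
  simp only [pow_zero, one_mul] at hC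
  exact ⟨C, hC⟩

lemma NCDecay.exists_norm_le_weight {ξ : ℝ → ℤ → ℂ} (hξ : NCDecay ξ) :
    ∃ C : ℝ, ∀ (x : ℝ) (k : ℤ),
      ‖ξ x k‖ ≤ C * ((1 + |x|) ^ 2)⁻¹ * ((1 + |(k : ℝ)|) ^ 2)⁻¹ := by
  obtain ⟨C, hC⟩ := hξ.2 4
  refine ⟨C, fun x k => ?_⟩
  have hweight : (1 + |x|) ^ 2 * (1 + |(k : ℝ)|) ^ 2 ≤ (1 + |x| + |(k : ℝ)|) ^ 4 := by
    rw [← mul_pow, show 4 = 2 * 2 from rfl, pow_mul]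
    gcongr
    nlinarith [abs_nonneg x, abs_nonneg (k : ℝ)]
  rw [mul_assoc, ← mul_inv, ← div_eq_mul_inv, le_div_iff₀ (by positivity)]
  calc ‖ξ x k‖ * ((1 + |x|) ^ 2 * (1 + |(k : ℝ)|) ^ 2)
      ≤ ‖ξ x k‖ * (1 + |x| + |(k : ℝ)|) ^ 4 := by gcongr
    _ ≤ C := by rw [mul_comm]; exact hC x k

lemma NCDecay.exists_norm_le_weight_of_norm_le {ξ P : ℝ → ℤ → ℂ} (hξ : NCDecay ξ) {B : ℝ}
    (hP : ∀ (x : ℝ) (k : ℤ), ‖P x k‖ ≤ B * ‖ξ x k‖) :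
    ∃ C : ℝ, ∀ (x : ℝ) (k : ℤ),
      ‖P x k‖ ≤ C * ((1 + |x|) ^ 2)⁻¹ * ((1 + |(k : ℝ)|) ^ 2)⁻¹ := by
  obtain ⟨C, hC⟩ := hξ.exists_norm_le_weight
  refine ⟨|B| * C, fun x k => ?_⟩
  calc ‖P x k‖ ≤ |B| * ‖ξ x k‖ :=
        (hP x k).trans (mul_le_mul_of_nonneg_right (le_abs_self B) (norm_nonneg _))
    _ ≤ |B| * (C * ((1 + |x|) ^ 2)⁻¹ * ((1 + |(k : ℝ)|) ^ 2)⁻¹) := by gcongr; exact hC x k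
    _ = _ := by ring

lemma summable_inv_one_add_abs_sq_int : Summable fun k : ℤ => ((1 + |(k : ℝ)|) ^ 2)⁻¹ := by
  refine (Real.summable_one_div_int_pow.2 one_lt_two).of_norm_bounded_eventually ?_
  filter_upwards [Filter.eventually_cofinite_ne 0] with k hk
  have hk1 : (1 : ℝ) ≤ |(k : ℝ)| := by exact_mod_cast Int.one_le_abs hk
  rw [Real.norm_of_nonneg (by positivity), one_div, ← sq_abs (k : ℝ)]
  exact inv_anti₀ (by positivity) (pow_le_pow_left₀ (abs_nonneg _) (by linarith) 2)

lemma integrable_inv_one_add_abs_sq : Integrable fun x : ℝ => ((1 + |x|) ^ 2)⁻¹ := by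
  refine integrable_inv_one_add_sq.mono' (by fun_prop) (Filter.Eventually.of_forall fun x => ?_)
  rw [Real.norm_of_nonneg (by positivity)]
  exact inv_anti₀ (by positivity) (by nlinarith [abs_nonneg x, sq_abs x])

lemma integrable_of_norm_le_weight {P : ℝ → ℤ → ℂ}
    (hPm : ∀ k : ℤ, AEStronglyMeasurable fun x => P x k) {C : ℝ}
    (hC : ∀ (x : ℝ) (k : ℤ), ‖P x k‖ ≤ C * ((1 + |x|) ^ 2)⁻¹ * ((1 + |(k : ℝ)|) ^ 2)⁻¹)
    (k : ℤ) : Integrable fun x => P x k :=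
  ((integrable_inv_one_add_abs_sq.const_mul C).mul_const _).mono' (hPm k)
    (Filter.Eventually.of_forall fun x => hC x k)

lemma summable_integral_of_norm_le_weight {P : ℝ → ℤ → ℂ} {C : ℝ}
    (hC : ∀ (x : ℝ) (k : ℤ), ‖P x k‖ ≤ C * ((1 + |x|) ^ 2)⁻¹ * ((1 + |(k : ℝ)|) ^ 2)⁻¹) :
    Summable fun k : ℤ => ∫ x, P x k := by
  refine (summable_inv_one_add_abs_sq_int.mul_left (C * ∫ x : ℝ, ((1 + |x|) ^ 2)⁻¹)).of_norm_bounded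
    fun k => ?_
  calc ‖∫ x, P x k‖ ≤ ∫ x, C * ((1 + |x|) ^ 2)⁻¹ * ((1 + |(k : ℝ)|) ^ 2)⁻¹ :=
        norm_integral_le_of_norm_le ((integrable_inv_one_add_abs_sq.const_mul C).mul_const _)
          (Filter.Eventually.of_forall fun x => hC x k)
    _ = _ := by rw [integral_mul_const, integral_const_mul]

lemma NCDecay.integrable_and_summable_integral {ξ P : ℝ → ℤ → ℂ} (hξ : NCDecay ξ)
    (hPm : ∀ k : ℤ, AEStronglyMeasurable fun x => P x k) {B : ℝ}
    (hP : ∀ (x : ℝ) (k : ℤ), ‖P x k‖ ≤ B * ‖ξ x k‖) :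
    (∀ k : ℤ, Integrable fun x => P x k) ∧ Summable fun k : ℤ => ∫ x, P x k := by
  obtain ⟨C, hC⟩ := hξ.exists_norm_le_weight_of_norm_le hP
  exact ⟨integrable_of_norm_le_weight hPm hC, summable_integral_of_norm_le_weight hC⟩

lemma tsum_integral_finsetSum {ι κ α E : Type*} [MeasurableSpace α] {μ : Measure α}
    [NormedAddCommGroup E] [NormedSpace ℝ E] (s : Finset ι) {P : ι → α → κ → E}
    (hP : ∀ n ∈ s, (∀ k, Integrable (fun x => P n x k) μ) ∧ Summable fun k => ∫ x, P n x k ∂μ) :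
    ∑' k, ∫ x, ∑ n ∈ s, P n x k ∂μ = ∑ n ∈ s, ∑' k, ∫ x, P n x k ∂μ := by
  rw [← Summable.tsum_finsetSum fun n hn => (hP n hn).2]
  exact tsum_congr fun k => integral_finsetSum s fun n hn => (hP n hn).1 k

lemma tsum_integral_comp_add {G κ E : Type*} [MeasurableSpace G] [AddGroup G] [MeasurableAdd G]
    {μ : Measure G} [μ.IsAddRightInvariant] [AddGroup κ] [NormedAddCommGroup E] [NormedSpace ℝ E]
    (P : G → κ → E) (a : G) (m : κ) :
    ∑' k, ∫ x, P (x + a) (k + m) ∂μ = ∑' k, ∫ x, P x k ∂μ := by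
  calc ∑' k, ∫ x, P (x + a) (k + m) ∂μ = ∑' k, ∫ x, P (x + a) k ∂μ :=
        (Equiv.addRight m).tsum_eq fun k => ∫ x, P (x + a) k ∂μ
    _ = ∑' k, ∫ x, P x k ∂μ := tsum_congr fun k => integral_add_right_eq_self (fun x => P x k) a

lemma leftAct_eq_sum (l0 l1 ε : ℝ) (r : ℤ) {F : ℤ → ℝ → ℂ} {s : Finset ℤ}
    (hF : ∀ n ∉ s, F n = 0) (ξ : ℝ → ℤ → ℂ) (x : ℝ) (k : ℤ) :
    leftAct l0 l1 ε r F ξ x k = ∑ n ∈ s, F n (l0 * x + l1 * k) * ξ (x - n * ε) (k - n * r) :=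
  tsum_eq_sum fun n hn => by simp [hF n hn]

lemma leftAct_ncStar_eq_sum (ℏ l0 l1 ε : ℝ) (r : ℤ) {F : ℤ → ℝ → ℂ} {s : Finset ℤ}
    (hF : ∀ n ∉ s, F n = 0) (η : ℝ → ℤ → ℂ) (x : ℝ) (k : ℤ) :
    leftAct l0 l1 ε r (ncStar ℏ F) η x k =
      ∑ n ∈ s, starRingEnd ℂ (F n (l0 * x + l1 * k - n * ℏ)) * η (x + n * ε) (k + n * r) := by
  have hF' : ∀ m ∉ s.map (Equiv.neg ℤ).toEmbedding, ncStar ℏ F m = 0 := fun m hm => by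
    ext u
    simp [ncStar, hF (-m) (by simpa using hm)]
  rw [leftAct_eq_sum l0 l1 ε r hF', Finset.sum_map]
  simp [ncStar, sub_eq_add_neg]

theorem innL_leftAct_eq_innL_leftAct_ncStar {ℏ l0 l1 ε : ℝ} {r : ℤ} (hpar : l0 * ε + l1 * r = -ℏ)
    (F : ℤ → ℝ →ᵇ ℂ) (s : Finset ℤ) (hF : ∀ n ∉ s, F n = 0) {ξ η : ℝ → ℤ → ℂ}
    (hξ : NCDecay ξ) (hη : NCDecay η) :
    innL (leftAct l0 l1 ε r (fun n => F n) ξ) η =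
      innL ξ (leftAct l0 l1 ε r (ncStar ℏ (fun n => F n)) η) := by
  have hF' : ∀ n ∉ s, (F n : ℝ → ℂ) = 0 := fun n hn => by simp [hF n hn]
  obtain ⟨Cξ, hCξ⟩ := hξ.exists_norm_le
  obtain ⟨Cη, hCη⟩ := hη.exists_norm_le
  simp only [innL, leftAct_eq_sum l0 l1 ε r hF', leftAct_ncStar_eq_sum ℏ l0 l1 ε r hF',
    Finset.sum_mul, map_sum, Finset.mul_sum]
  rw [tsum_integral_finsetSum s fun n _ =>
      hη.integrable_and_summable_integral (B := ‖F n‖ * Cξ) ?leftMeas ?leftBound,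
    tsum_integral_finsetSum s fun n _ =>
      hξ.integrable_and_summable_integral (B := ‖F n‖ * Cη) ?rightMeas ?rightBound]
  · refine Finset.sum_congr rfl fun n _ => ?_
    rw [← tsum_integral_comp_add _ ((n : ℝ) * ε) (n * r)]
    refine tsum_congr fun k => integral_congr_ae (Filter.Eventually.of_forall fun x => ?_)
    have harg : l0 * (x + n * ε) + l1 * ((k + n * r : ℤ) : ℝ) = l0 * x + l1 * k - n * ℏ := by
      push_cast
      linear_combination (n : ℝ) * hpar
    simp only [harg, add_sub_cancel_right, map_mul, Complex.conj_conj]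
    ring
  case leftMeas =>
    exact fun k => ((F n).continuous.comp (by fun_prop)).mul
      ((hξ.1 _).comp (by fun_prop)) |>.mul (hη.1 k).star |>.aestronglyMeasurable
  case rightMeas =>
    exact fun k => (hξ.1 k).mul (((F n).continuous.comp (by fun_prop)).star.mul
      ((hη.1 _).comp (by fun_prop))).star |>.aestronglyMeasurable
  case leftBound =>
    intro x k
    rw [norm_mul, norm_mul, Complex.norm_conj]
    gcongr
    exacts [(F n).norm_coe_le_norm _, hCξ _ _]
  case rightBound =>
    intro x k
    rw [norm_mul, Complex.norm_conj, norm_mul, Complex.norm_conj, mul_comm]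
    gcongr
    exacts [(F n).norm_coe_le_norm _, hCη _ _]

/-- `(f·ξ, η)_L = (ξ, f*·η)_L`. -/
theorem leftAct_adjoint (ℏ l0 l1 ε : ℝ) (r : ℤ) (hpar : l0 * ε + l1 * r = -ℏ)
    (f : ℤ → SchwartzMap ℝ ℂ) (hf : (Function.support f).Finite)
    (ξ η : ℝ → ℤ → ℂ) (hξ : NCDecay ξ) (hη : NCDecay η) :
    innL (leftAct l0 l1 ε r (fun n => ⇑(f n)) ξ) η =
      innL ξ (leftAct l0 l1 ε r (ncStar ℏ (fun n => ⇑(f n))) η) :=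
  innL_leftAct_eq_innL_leftAct_ncStar hpar (fun n => (f n).toBoundedContinuousFunction)
    hf.toFinset (fun n hn => by ext; simp_all) hξ hη
end

section
/- If λ₀ε + λ₁r = −ℏ, μ₀ε' + μ₁r' = ℏ', λ₀ε' + λ₁r' = 0 and μ₀ε + μ₁r = 0, then the left C_ℏ^∞-action (f·ξ)(x,k) = Σ_n f_n(λ₀x+λ₁k)ξ(x−nε,k−nr) and the right C_{ℏ'}^∞-action (ξ·g)(x,k) = Σ_n g_n(μ₀x+μ₁k−nℏ')ξ(x−nε',k−nr') commute: f·(ξ·g) = (f·ξ)·g, making S(ℝ×ℤ) a (C_ℏ^∞, C_{ℏ'}^∞)-bimodule. -/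
/-- The right action `(ξ·g)(x,k) = ∑_n g_n(μ₀x + μ₁k − nℏ') ξ(x − nε', k − nr')`. -/
noncomputable def rightAct (m0 m1 ε' ℏ' : ℝ) (r' : ℤ) (g : ℤ → ℝ → ℂ) (ξ : ℝ → ℤ → ℂ) :
    ℝ → ℤ → ℂ :=
  fun x k => ∑' n : ℤ, g n (m0 * x + m1 * k - n * ℏ') * ξ (x - n * ε') (k - n * r')

/-!
With finitely many nonzero coefficients both composites are finite double sums over pairs
`(n, m)` of terms `f_n(·) g_m(·) ξ(x − nε − mε', k − nr − mr')`. The conditions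
`λ₀ε' + λ₁r' = 0` and `μ₀ε + μ₁r = 0` say that the phase of each action is invariant under the
translation of the other, so the coefficients are evaluated at the same points on both sides,
and the two double sums agree after exchanging the order of summation.
-/

lemma apply_eq_zero_of_notMem_toFinset {ι α M : Type*} [Zero M] {f : ι → α → M}
    (hf : (Function.support f).Finite) {n : ι} (hn : n ∉ hf.toFinset) (t : α) : f n t = 0 := by
  have hfn : f n = 0 := Function.notMem_support.mp (by simpa using hn)
  rw [hfn, Pi.zero_apply]

lemma tsum_mul_eq_sum_of_support_finite {ι α R : Type*} [NonUnitalNonAssocSemiring R]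
    [TopologicalSpace R] {f : ι → α → R} (hf : (Function.support f).Finite)
    (t : ι → α) (c : ι → R) :
    ∑' n, f n (t n) * c n = ∑ n ∈ hf.toFinset, f n (t n) * c n :=
  tsum_eq_sum fun n hn => by rw [apply_eq_zero_of_notMem_toFinset hf hn, zero_mul]

lemma leftAct_apply_eq_sum (l0 l1 ε : ℝ) (r : ℤ) {f : ℤ → ℝ → ℂ}
    (hf : (Function.support f).Finite) (ξ : ℝ → ℤ → ℂ) (x : ℝ) (k : ℤ) :
    leftAct l0 l1 ε r f ξ x k =
      ∑ n ∈ hf.toFinset, f n (l0 * x + l1 * k) * ξ (x - n * ε) (k - n * r) :=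
  tsum_mul_eq_sum_of_support_finite hf (fun _ => _) _

lemma rightAct_apply_eq_sum (m0 m1 ε' ℏ' : ℝ) (r' : ℤ) {g : ℤ → ℝ → ℂ}
    (hg : (Function.support g).Finite) (ξ : ℝ → ℤ → ℂ) (x : ℝ) (k : ℤ) :
    rightAct m0 m1 ε' ℏ' r' g ξ x k =
      ∑ m ∈ hg.toFinset, g m (m0 * x + m1 * k - m * ℏ') * ξ (x - m * ε') (k - m * r') :=
  tsum_mul_eq_sum_of_support_finite hg (fun _ => _) _

lemma linear_phase_shift_invariant {a b ε : ℝ} {r : ℤ} (h : a * ε + b * r = 0) (x : ℝ)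
    (k n : ℤ) : a * (x - n * ε) + b * ((k - n * r : ℤ) : ℝ) = a * x + b * k := by
  push_cast
  linear_combination (-(n : ℝ)) * h

theorem bimodule_actions_commute_general (ℏ' l0 l1 m0 m1 ε ε' : ℝ) (r r' : ℤ)
    (h3 : l0 * ε' + l1 * r' = 0) (h4 : m0 * ε + m1 * r = 0)
    (f g : ℤ → ℝ → ℂ)
    (hf : (Function.support f).Finite) (hg : (Function.support g).Finite)
    (ξ : ℝ → ℤ → ℂ) :
    leftAct l0 l1 ε r f (rightAct m0 m1 ε' ℏ' r' g ξ) =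
      rightAct m0 m1 ε' ℏ' r' g (leftAct l0 l1 ε r f ξ) := by
  funext x k
  simp only [leftAct_apply_eq_sum _ _ _ _ hf, rightAct_apply_eq_sum _ _ _ _ _ hg,
    linear_phase_shift_invariant h3, linear_phase_shift_invariant h4, Finset.mul_sum]
  rw [Finset.sum_comm]
  refine Finset.sum_congr rfl fun m _ => Finset.sum_congr rfl fun n _ => ?_
  rw [sub_right_comm x, sub_right_comm (k : ℤ)]
  ring

/-- Under the compatibility conditions of the parameters, the left `C_ℏ^∞`-action and the
right `C_{ℏ'}^∞`-action commute, making `S(ℝ×ℤ)` a bimodule. -/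
theorem bimodule_actions_commute (ℏ ℏ' l0 l1 m0 m1 ε ε' : ℝ) (r r' : ℤ)
    (h1 : l0 * ε + l1 * r = -ℏ) (h2 : m0 * ε' + m1 * r' = ℏ')
    (h3 : l0 * ε' + l1 * r' = 0) (h4 : m0 * ε + m1 * r = 0)
    (f g : ℤ → ℝ → ℂ)
    (hf : (Function.support f).Finite) (hg : (Function.support g).Finite)
    (ξ : ℝ → ℤ → ℂ) :
    leftAct l0 l1 ε r f (rightAct m0 m1 ε' ℏ' r' g ξ) =
      rightAct m0 m1 ε' ℏ' r' g (leftAct l0 l1 ε r f ξ) :=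
  bimodule_actions_commute_general ℏ' l0 l1 m0 m1 ε ε' r r' h3 h4 f g hf hg ξ
end

section
/- Let E_ℏ be the left C_ℏ^∞-module S(ℝ×ℤ) with parameters λ₀ ≠ 0, λ₁, ε, r satisfying λ₀ε + λ₁r = −ℏ and r ≥ 1. Writing k = k₀r + k₁ with 0 ≤ k₁ ≤ r−1, the map φ : (C_ℏ^∞)^r → E_ℏ defined by φ(F)(x,k) = F^{k₁}_{k₀}(λ₀x + λ₁k) (where F^j = Σ_n F^j_n(u)W^n) is an isomorphism of left C_ℏ^∞-modules. -/
/-- Schwartz-type decay for an algebra element, jointly in `(n, u)`. -/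
def JScoeff (F : ℤ → ℝ → ℂ) : Prop :=
  ∀ N : ℕ, ∃ C : ℝ, ∀ (n : ℤ) (u : ℝ),
    (1 + |u| + |(n : ℝ)|) ^ N * ‖F n u‖ ≤ C

/-- Schwartz-type decay for a module element, jointly in `(x, k)`. -/
def JSmod (ξ : ℝ → ℤ → ℂ) : Prop :=
  ∀ N : ℕ, ∃ C : ℝ, ∀ (x : ℝ) (k : ℤ),
    (1 + |x| + |(k : ℝ)|) ^ N * ‖ξ x k‖ ≤ C

/-- The map `φ(F)(x,k) = F^{k₁}_{k₀}(λ₀x + λ₁k)`, where `k = k₀ r + k₁` with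
`0 ≤ k₁ ≤ r − 1` (the class of `k` in `ZMod r` and the floor quotient `k / r`). -/
noncomputable def phiMap (r : ℕ) (l0 l1 : ℝ) (F : ZMod r → ℤ → ℝ → ℂ) : ℝ → ℤ → ℂ :=
  fun x k => F (k : ZMod r) (k / (r : ℤ)) (l0 * x + l1 * k)

/-!
Writing `k = (k / r) r + j` with `j = k mod r`, the map `φ` is inverted by
`ψ(ξ)^j_n(u) = ξ((u - λ₁k)/λ₀, k)` with `k = nr + j`, since `λ₀ ≠ 0`. The weights
`1 + |x| + |k|` and `1 + |λ₀x + λ₁k| + |k / r|` bound each other up to constants, so `φ`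
and `ψ` preserve rapid decay. Finally, shifting `(x, k)` by `(-nε, -nr)` keeps `k mod r`,
lowers `k / r` by `n` and, by `λ₀ε + λ₁r = -ℏ`, raises `λ₀x + λ₁k` by `nℏ`: this is exactly
the twist in the product of `C_ℏ^∞`.
-/

section Decomposition

variable {r : ℕ} [NeZero r]

lemma intCast_mul_add_val (j : ZMod r) (n : ℤ) : ((n * r + j.val : ℤ) : ZMod r) = j := by
  push_cast
  simp [ZMod.natCast_rightInverse j]

lemma mul_add_val_ediv (j : ZMod r) (n : ℤ) : (n * r + j.val) / (r : ℤ) = n := by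
  have hr : (r : ℤ) ≠ 0 := Int.natCast_ne_zero.mpr (NeZero.ne r)
  have hj : (j.val : ℤ) < r := by exact_mod_cast ZMod.val_lt j
  rw [add_comm, Int.add_mul_ediv_right _ _ hr, Int.ediv_eq_zero_of_lt (Int.natCast_nonneg _) hj,
    zero_add]

lemma ediv_mul_add_val (k : ℤ) : k / (r : ℤ) * r + (k : ZMod r).val = k := by
  rw [ZMod.val_intCast, mul_comm]
  exact Int.mul_ediv_add_emod k r

omit [NeZero r] in
lemma intCast_sub_mul (k n : ℤ) : ((k - n * r : ℤ) : ZMod r) = k := by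
  push_cast
  simp

lemma sub_mul_ediv (k n : ℤ) : (k - n * r) / (r : ℤ) = k / r - n := by
  have hr : (r : ℤ) ≠ 0 := Int.natCast_ne_zero.mpr (NeZero.ne r)
  rw [sub_eq_add_neg, ← neg_mul, Int.add_mul_ediv_right _ _ hr, ← sub_eq_add_neg]

end Decomposition

lemma abs_intCast_le_mul_one_add_abs_ediv (k : ℤ) {r : ℤ} (hr : 0 < r) :
    |(k : ℝ)| ≤ r * (1 + |((k / r : ℤ) : ℝ)|) := by
  have hk : |k| ≤ r * (1 + |k / r|) :=
    calc |k| = |r * (k / r) + k % r| := by rw [Int.mul_ediv_add_emod]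
      _ ≤ |r * (k / r)| + |k % r| := abs_add_le _ _
      _ = r * |k / r| + k % r := by
          rw [abs_mul, abs_of_pos hr, abs_of_nonneg (Int.emod_nonneg k hr.ne')]
      _ ≤ r * (1 + |k / r|) := by linarith [Int.emod_lt_of_pos k hr]
  exact_mod_cast hk

lemma pow_mul_le_of_weight_le {v w a C D : ℝ} {N : ℕ} (hv : 0 ≤ v) (hD : 0 ≤ D)
    (ha : 0 ≤ a) (hvw : v ≤ D * w) (hw : w ^ N * a ≤ C) : v ^ N * a ≤ D ^ N * C :=
  calc v ^ N * a ≤ (D * w) ^ N * a := by gcongr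
    _ = D ^ N * (w ^ N * a) := by ring
    _ ≤ D ^ N * C := by gcongr

lemma one_add_abs_add_abs_le (r : ℕ) [NeZero r] {l0 : ℝ} (l1 : ℝ) (hl0 : l0 ≠ 0) :
    ∃ D : ℝ, 0 ≤ D ∧ ∀ (x : ℝ) (k : ℤ),
      1 + |x| + |(k : ℝ)| ≤ D * (1 + |l0 * x + l1 * k| + |((k / (r : ℤ) : ℤ) : ℝ)|) := by
  have ha : 0 < |l0| := abs_pos.mpr hl0
  set c := (|l1| + |l0|) * r
  refine ⟨(|l0| + 1 + c) / |l0|, by positivity, fun x k => ?_⟩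
  set u := l0 * x + l1 * k
  set m : ℤ := k / (r : ℤ)
  have hk : |(k : ℝ)| ≤ r * (1 + |(m : ℝ)|) := by
    exact_mod_cast abs_intCast_le_mul_one_add_abs_ediv k (r := r) (by exact_mod_cast NeZero.pos r)
  have hx : |l0| * |x| ≤ |u| + |l1| * |(k : ℝ)| := by
    rw [← abs_mul, ← abs_mul, show l0 * x = u - l1 * k by ring]
    exact abs_sub _ _
  have hck : (|l1| + |l0|) * |(k : ℝ)| ≤ c * (1 + |(m : ℝ)|) := by
    rw [mul_assoc]; gcongr
  have hc : 0 ≤ c := by positivity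
  rw [div_mul_eq_mul_div, le_div_iff₀ ha]
  nlinarith [abs_nonneg u, abs_nonneg (m : ℝ), mul_nonneg ha.le (abs_nonneg u),
    mul_nonneg ha.le (abs_nonneg (m : ℝ)), mul_nonneg hc (abs_nonneg u)]

lemma one_add_abs_add_abs_le_of_abs_le (l0 l1 x : ℝ) {k n : ℤ} (hn : |n| ≤ |k|) :
    1 + |l0 * x + l1 * k| + |(n : ℝ)| ≤ (1 + |l0| + |l1|) * (1 + |x| + |(k : ℝ)|) := by
  have h1 : |l0 * x + l1 * k| ≤ |l0| * |x| + |l1| * |(k : ℝ)| := by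
    rw [← abs_mul, ← abs_mul]
    exact abs_add_le _ _
  have h2 : |(n : ℝ)| ≤ |(k : ℝ)| := by exact_mod_cast hn
  nlinarith [abs_nonneg x, abs_nonneg (k : ℝ), abs_nonneg l0, abs_nonneg l1]

lemma exists_uniform_bound_of_JScoeff {ι : Type*} [Finite ι] {F : ι → ℤ → ℝ → ℂ}
    (hF : ∀ j, JScoeff (F j)) (N : ℕ) :
    ∃ C : ℝ, ∀ j (n : ℤ) (u : ℝ), (1 + |u| + |(n : ℝ)|) ^ N * ‖F j n u‖ ≤ C := by
  choose C hC using fun j => hF j N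
  obtain ⟨M, hM⟩ := Finite.exists_le C
  exact ⟨M, fun j n u => (hC j n u).trans (hM j)⟩

noncomputable def phiInv (r : ℕ) (l0 l1 : ℝ) (ξ : ℝ → ℤ → ℂ) : ZMod r → ℤ → ℝ → ℂ :=
  fun j n u => ξ ((u - l1 * ((n * r + j.val : ℤ) : ℝ)) / l0) (n * r + j.val)

section Inverse

variable (r : ℕ) [NeZero r] {l0 : ℝ} (l1 : ℝ)

lemma phiInv_phiMap (hl0 : l0 ≠ 0) (F : ZMod r → ℤ → ℝ → ℂ) :
    phiInv r l0 l1 (phiMap r l0 l1 F) = F := by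
  funext j n u
  simp only [phiInv, phiMap, intCast_mul_add_val, mul_add_val_ediv]
  congr 1
  field_simp
  ring

lemma phiMap_phiInv (hl0 : l0 ≠ 0) (ξ : ℝ → ℤ → ℂ) : phiMap r l0 l1 (phiInv r l0 l1 ξ) = ξ := by
  funext x k
  simp only [phiMap, phiInv, ediv_mul_add_val]
  congr 1
  field_simp
  ring

lemma JSmod_phiMap (hl0 : l0 ≠ 0) {F : ZMod r → ℤ → ℝ → ℂ} (hF : ∀ j, JScoeff (F j)) :
    JSmod (phiMap r l0 l1 F) := by
  intro N
  obtain ⟨D, hD, hweight⟩ := one_add_abs_add_abs_le r l1 hl0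
  obtain ⟨C, hC⟩ := exists_uniform_bound_of_JScoeff hF N
  exact ⟨D ^ N * C, fun x k =>
    pow_mul_le_of_weight_le (by positivity) hD (norm_nonneg _) (hweight x k) (hC _ _ _)⟩

lemma JScoeff_phiInv (hl0 : l0 ≠ 0) {ξ : ℝ → ℤ → ℂ} (hξ : JSmod ξ) (j : ZMod r) :
    JScoeff (phiInv r l0 l1 ξ j) := by
  intro N
  obtain ⟨C, hC⟩ := hξ N
  refine ⟨(1 + |l0| + |l1|) ^ N * C, fun n u => ?_⟩
  set k : ℤ := n * r + j.val
  set x : ℝ := (u - l1 * k) / l0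
  have hu : u = l0 * x + l1 * k := by simp only [x]; field_simp; ring
  have hn : |n| ≤ |k| := by
    simpa only [k, mul_add_val_ediv] using Int.abs_ediv_le_abs k r
  have hbound := pow_mul_le_of_weight_le (by positivity) (by positivity) (norm_nonneg _)
    (one_add_abs_add_abs_le_of_abs_le l0 l1 x hn) (hC x k)
  rwa [← hu] at hbound

end Inverse

lemma phiMap_ncProd (ℏ l0 l1 ε : ℝ) (r : ℕ) [NeZero r] (hpar : l0 * ε + l1 * (r : ℝ) = -ℏ)
    (f : ℤ → ℝ → ℂ) (F : ZMod r → ℤ → ℝ → ℂ) :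
    phiMap r l0 l1 (fun j => ncProd ℏ f (F j)) = leftAct l0 l1 ε r f (phiMap r l0 l1 F) := by
  funext x k
  refine tsum_congr fun n => ?_
  have hu : l0 * (x - n * ε) + l1 * ((k - n * r : ℤ) : ℝ) = l0 * x + l1 * k + n * ℏ := by
    push_cast
    linear_combination (-(n : ℝ)) * hpar
  simp only [phiMap, intCast_sub_mul, sub_mul_ediv, hu]

/-- `φ : (C_ℏ^∞)^r → E_ℏ` is an isomorphism of left modules: it is a bijection between
the Schwartz-type classes, and it intertwines the componentwise multiplication with
the left module action. -/
theorem phiMap_left_module_iso (ℏ l0 l1 ε : ℝ) (r : ℕ) (hr : 1 ≤ r)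
    (hl0 : l0 ≠ 0) (hpar : l0 * ε + l1 * (r : ℝ) = -ℏ) :
    Set.BijOn (phiMap r l0 l1)
      {F : ZMod r → ℤ → ℝ → ℂ | ∀ j, JScoeff (F j)} {ξ | JSmod ξ} ∧
    ∀ (f : ℤ → ℝ → ℂ), (Function.support f).Finite →
      ∀ F : ZMod r → ℤ → ℝ → ℂ,
        phiMap r l0 l1 (fun j => ncProd ℏ f (F j)) =
          leftAct l0 l1 ε (r : ℤ) f (phiMap r l0 l1 F) := by
  have : NeZero r := ⟨by omega⟩
  have hinv : Set.InvOn (phiInv r l0 l1) (phiMap r l0 l1)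
      {F | ∀ j, JScoeff (F j)} {ξ | JSmod ξ} :=
    ⟨fun F _ => phiInv_phiMap r l1 hl0 F, fun ξ _ => phiMap_phiInv r l1 hl0 ξ⟩
  exact ⟨hinv.bijOn (fun F hF => JSmod_phiMap r l1 hl0 hF)
      (fun ξ hξ => JScoeff_phiInv r l1 hl0 hξ),
    fun f _ F => phiMap_ncProd ℏ l0 l1 ε r hpar f F⟩
end

section
/- Suppose ℏ, ℏ' > 0, λ₀ ≠ 0, and the bimodule parameter equations λ₀ε + λ₁r = −ℏ, λ₀ε' + λ₁r' = 0, λ₀ε' + μ₁r' = ℏ', λ₀ε + μ₁r = 0 hold together with βε + γr = βε' + γr' = 2πi. If ℏ ≠ ℏ', then necessarily ℏ'/ℏ = r'/r; in particular ℏ/ℏ' is rational. If ℏ = ℏ', then necessarily β = 0, r = r' ≠ 0 and ε ≠ ε'. -/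
/-- Compatibility conditions for a bimodule connection on the noncommutative cylinder:
if `ℏ ≠ ℏ'` then `ℏ'/ℏ = r'/r` (so `ℏ/ℏ'` is rational); if `ℏ = ℏ'` then `β = 0`,
`r = r' ≠ 0` and `ε ≠ ε'`. -/
theorem bimodule_connection_conditions
    (ℏ ℏ' l0 l1 m1 ε ε' : ℝ) (r r' : ℤ) (β γ : ℂ)
    (hℏ : 0 < ℏ) (hℏ' : 0 < ℏ') (hl0 : l0 ≠ 0)
    (e1 : l0 * ε + l1 * r = -ℏ)
    (e2 : l0 * ε' + l1 * r' = 0)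
    (e3 : l0 * ε' + m1 * r' = ℏ')
    (e4 : l0 * ε + m1 * r = 0)
    (e5 : β * (ε : ℂ) + γ * (r : ℂ) = 2 * Real.pi * Complex.I)
    (e6 : β * (ε' : ℂ) + γ * (r' : ℂ) = 2 * Real.pi * Complex.I) :
    (ℏ ≠ ℏ' → ℏ' / ℏ = (r' : ℝ) / (r : ℝ) ∧ ∃ q : ℚ, ℏ / ℏ' = (q : ℝ)) ∧
    (ℏ = ℏ' → β = 0 ∧ r = r' ∧ r ≠ 0 ∧ ε ≠ ε') := by
  have hdr : (m1 - l1) * (r : ℝ) = ℏ := by linarith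
  have hdr' : (m1 - l1) * (r' : ℝ) = ℏ' := by linarith
  have hd : m1 - l1 ≠ 0 := by
    intro h; rw [h, zero_mul] at hdr; linarith
  have hrR : (r : ℝ) ≠ 0 := by
    intro h; rw [h, mul_zero] at hdr; linarith
  have hrR' : (r' : ℝ) ≠ 0 := by
    intro h; rw [h, mul_zero] at hdr'; linarith
  constructor
  · intro _
    refine ⟨?_, ⟨(r : ℚ) / (r' : ℚ), ?_⟩⟩
    · rw [div_eq_div_iff hℏ.ne' hrR]
      linear_combination (r' : ℝ) * hdr - (r : ℝ) * hdr'
    · push_cast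
      rw [div_eq_div_iff hℏ'.ne' hrR']
      linear_combination (r : ℝ) * hdr' - (r' : ℝ) * hdr
  · intro heq
    have hrr' : r = r' := by
      have : (r : ℝ) = (r' : ℝ) :=
        mul_left_cancel₀ hd (hdr.trans (heq.trans hdr'.symm))
      exact_mod_cast this
    have hee : ε ≠ ε' := by
      intro h
      subst h
      rw [hrr'] at e1
      have : (0:ℝ) = -ℏ := by linarith
      linarith
    have hr0 : r ≠ 0 := by exact_mod_cast hrR
    refine ⟨?_, hrr', hr0, hee⟩
    have h56 : β * ((ε : ℂ) - (ε' : ℂ)) = 0 := by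
      have : (r : ℂ) = (r' : ℂ) := by exact_mod_cast hrr'
      have h7 := e5.trans e6.symm
      rw [this] at h7
      linear_combination h7
    have heC : (ε : ℂ) - (ε' : ℂ) ≠ 0 := by
      intro h
      apply hee
      have : (ε : ℂ) = (ε' : ℂ) := sub_eq_zero.mp h
      exact_mod_cast this
    exact (mul_eq_zero.mp h56).resolve_right heC
end
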